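/- arXiv:1910.06959 — 5 statements merged into one kernel-verified Lean document; each statement's English description precedes it below -/
import Mathlib

section
/- Vanishing of the high multilinear components (Lemma 5.1, first assertion): Fix κ ∈ {1, −1} and let w_n^{(k)} be defined by the multilinear recursion. If n is odd then w_n^{(k)} ≡ 0 for every k > (n+1)/2; if n is even then w_n^{(k)} ≡ 0 for every k > n/2. That is, in these ranges w_n^{(k)}[φ_1,…,φ_k; ψ_2,…,ψ_k](x) = 0 for all Schwartz inputs φ_1,…,φ_k, ψ_2,…,ψ_k ∈ S(ℝ;ℂ) and all x ∈ ℝ. -/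
/-!
Each term of the quadratic sum in the recursion for `w (n + 1) k` pairs a factor `w m l` with a
factor `w (n - m) (k - l)`. If neither factor lies in the vanishing range, then `2 * l ≤ m + 1` and
`2 * (k - l) ≤ n - m + 1`, so `2 * k ≤ n + 2`. Hence, by strong induction on `n`, `w n k ≡ 0`
whenever `n + 1 < 2 * k`: the derivative term vanishes because `w n k` does, and every product in
the sum has a vanishing factor. Both parity cases of the theorem lie in this range.
-/

namespace NLSHierarchy

open Finset

variable {w : ℕ → ℕ → (ℕ → ℝ → ℂ) → (ℕ → ℝ → ℂ) → ℝ → ℂ}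

theorem quadratic_sum_eq_zero {n k : ℕ} (hk : n + 2 < 2 * k)
    (ih : ∀ m < n, 1 ≤ m → ∀ j, m + 1 < 2 * j → ∀ φ ψ, w m j φ ψ = 0)
    (φ ψ : ℕ → ℝ → ℂ) (x : ℝ) :
    ∑ m ∈ Ico 1 n, ∑ l ∈ Ico 1 k,
      ψ (l + 1) x * w m l φ ψ x *
        w (n - m) (k - l) (fun i => φ (l + i)) (fun i => ψ (l + i)) x = 0 := by
  refine sum_eq_zero fun m hm => sum_eq_zero fun l hl => ?_
  rw [mem_Ico] at hm hl
  by_cases hleft : m + 1 < 2 * l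
  · rw [ih m (by omega) hm.1 l hleft, Pi.zero_apply, mul_zero, zero_mul]
  · rw [ih (n - m) (by omega) (by omega) (k - l) (by omega), Pi.zero_apply, mul_zero]

theorem eq_zero_of_succ_lt_two_mul {κ : ℂ}
    (hw_base : ∀ k, 2 ≤ k → ∀ φ ψ : ℕ → ℝ → ℂ, w 1 k φ ψ = 0)
    (hw_rec : ∀ n k, 1 ≤ n → 1 ≤ k → ∀ (φ ψ : ℕ → ℝ → ℂ) (x : ℝ),
      w (n + 1) k φ ψ x =
        -Complex.I * deriv (w n k φ ψ) x +
          κ * ∑ m ∈ Ico 1 n, ∑ l ∈ Ico 1 k,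
            ψ (l + 1) x * w m l φ ψ x *
              w (n - m) (k - l) (fun i => φ (l + i)) (fun i => ψ (l + i)) x)
    {n k : ℕ} (hn : 1 ≤ n) (hk : n + 1 < 2 * k) (φ ψ : ℕ → ℝ → ℂ) : w n k φ ψ = 0 := by
  induction n using Nat.strong_induction_on generalizing k φ ψ with
  | _ n ih =>
    obtain rfl | ⟨n, hn', rfl⟩ : n = 1 ∨ ∃ n', 1 ≤ n' ∧ n = n' + 1 :=
      (eq_or_lt_of_le hn).imp Eq.symm fun h => ⟨n - 1, by omega, by omega⟩
    · exact hw_base k (by omega) φ ψ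
    · funext x
      have hderiv : w n k φ ψ = 0 := ih n (by omega) hn' (by omega) φ ψ
      have hsum := quadratic_sum_eq_zero (n := n) (k := k) (by omega)
        (fun m hm hm₁ j hj => ih m (by omega) hm₁ hj) φ ψ x
      rw [hw_rec n k hn' (by omega), hderiv, hsum]
      simp

end NLSHierarchy

theorem nls_hierarchy_high_components_vanish_general
    (κ : ℂ)
    (w : ℕ → ℕ → (ℕ → ℝ → ℂ) → (ℕ → ℝ → ℂ) → ℝ → ℂ)
    (hw_base₂ : ∀ k, 2 ≤ k → ∀ φ ψ : ℕ → ℝ → ℂ, w 1 k φ ψ = 0)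
    (hw_rec : ∀ n k, 1 ≤ n → 1 ≤ k → ∀ (φ ψ : ℕ → ℝ → ℂ) (x : ℝ),
      w (n + 1) k φ ψ x =
        -Complex.I * deriv (w n k φ ψ) x +
          κ * ∑ m ∈ Finset.Ico 1 n, ∑ l ∈ Finset.Ico 1 k,
            ψ (l + 1) x * w m l φ ψ x *
              w (n - m) (k - l) (fun i => φ (l + i)) (fun i => ψ (l + i)) x)
    (n k : ℕ) (hn : 1 ≤ n) :
    (Odd n → n + 1 < 2 * k →
      ∀ (φ ψ : ℕ → SchwartzMap ℝ ℂ) (x : ℝ),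
        w n k (fun i => ⇑(φ i)) (fun i => ⇑(ψ i)) x = 0) ∧
    (Even n → n < 2 * k →
      ∀ (φ ψ : ℕ → SchwartzMap ℝ ℂ) (x : ℝ),
        w n k (fun i => ⇑(φ i)) (fun i => ⇑(ψ i)) x = 0) := by
  have vanish (hk : n + 1 < 2 * k) (φ ψ : ℕ → SchwartzMap ℝ ℂ) (x : ℝ) :
      w n k (fun i => ⇑(φ i)) (fun i => ⇑(ψ i)) x = 0 :=
    congrFun (NLSHierarchy.eq_zero_of_succ_lt_two_mul hw_base₂ hw_rec hn hk _ _) x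
  refine ⟨fun _ hk => vanish hk, fun ⟨m, hm⟩ hk => vanish (by omega)⟩

/-- Vanishing of the high multilinear components: if `n` is odd then
`w n k ≡ 0` for every `k > (n+1)/2` (i.e. `n + 1 < 2 * k`), and if `n` is even then
`w n k ≡ 0` for every `k > n/2` (i.e. `n < 2 * k`), on all Schwartz inputs. -/
theorem nls_hierarchy_high_components_vanish
    (κ : ℂ) (hκ : κ = 1 ∨ κ = -1)
    (w : ℕ → ℕ → (ℕ → ℝ → ℂ) → (ℕ → ℝ → ℂ) → ℝ → ℂ)
    (hw_base₁ : ∀ φ ψ : ℕ → ℝ → ℂ, w 1 1 φ ψ = φ 1)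
    (hw_base₂ : ∀ k, 2 ≤ k → ∀ φ ψ : ℕ → ℝ → ℂ, w 1 k φ ψ = 0)
    (hw_rec : ∀ n k, 1 ≤ n → 1 ≤ k → ∀ (φ ψ : ℕ → ℝ → ℂ) (x : ℝ),
      w (n + 1) k φ ψ x =
        -Complex.I * deriv (w n k φ ψ) x +
          κ * ∑ m ∈ Finset.Ico 1 n, ∑ l ∈ Finset.Ico 1 k,
            ψ (l + 1) x * w m l φ ψ x *
              w (n - m) (k - l) (fun i => φ (l + i)) (fun i => ψ (l + i)) x)
    (n k : ℕ) (hn : 1 ≤ n) :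
    (Odd n → n + 1 < 2 * k →
      ∀ (φ ψ : ℕ → SchwartzMap ℝ ℂ) (x : ℝ),
        w n k (fun i => ⇑(φ i)) (fun i => ⇑(ψ i)) x = 0) ∧
    (Even n → n < 2 * k →
      ∀ (φ ψ : ℕ → SchwartzMap ℝ ℂ) (x : ℝ),
        w n k (fun i => ⇑(φ i)) (fun i => ⇑(ψ i)) x = 0) :=
  nls_hierarchy_high_components_vanish_general κ w hw_base₂ hw_rec n k hn
end

section
/- Structure of the multilinear components (Lemma 5.1, second assertion): Fix κ ∈ {1, −1} and let w_n^{(k)} be defined by the multilinear recursion. For every odd n and every k ≥ 1 there exists a family of real numbers a_{(α,α′)}, indexed by pairs of multi-indices (α, α′) ∈ ℕ_0^k × ℕ_0^{k−1} with |α| + |α′| = n − 1 − 2(k−1), such that for all Schwartz inputs w_n^{(k)}[φ_1,…,φ_k; ψ_2,…,ψ_k] = ∑_{(α,α′)} a_{(α,α′)} (∏_{r=1}^{k} ∂_x^{α_r} φ_r)(∏_{r=2}^{k} ∂_x^{α′_r} ψ_r). For every even n the same holds with an overall factor i, i.e. w_n^{(k)}[φ;ψ] = i ∑_{(α,α′)}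 a_{(α,α′)} (∏_{r=1}^{k} ∂_x^{α_r} φ_r)(∏_{r=2}^{k} ∂_x^{α′_r} ψ_r) with a_{(α,α′)} ∈ ℝ. (When n − 1 − 2(k−1) < 0 the index set is empty and the sum is zero.) -/
/-!
Up to the phase `i ^ (n - 1)`, the components `w n k` satisfy a recursion with real
coefficients: `v n k := (-i) ^ (n - 1) • w n k` obeys
`v (n + 1) k = -∂ₓ v n k - κ ∑ ψₗ₊₁ · v m l · v (n - m) (k - l)`.
The real span of the monomials `∏ ∂^{α_r} φ_r · ∏ ∂^{α'_r} ψ_r` of total order `d` is mapped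
by `∂ₓ` into total order `d + 1` (Leibniz rule), and the splicing product `ψₗ₊₁ · f · g` maps
orders `d, e` to `d + e`. Strong induction on `n` puts `v n k` in order `n - 1 - 2 (k - 1)`;
finally `i ^ (n - 1)` is real for odd `n` and `i` times a real number for even `n`.
-/

open Finset Complex
open scoped ContDiff SchwartzMap

section IteratedDerivatives

variable {𝕜 : Type*} [NontriviallyNormedField 𝕜] {𝔸 : Type*} [NormedCommRing 𝔸]
  [NormedAlgebra 𝕜 𝔸] {ι : Type*} [Fintype ι] [DecidableEq ι]

theorem hasDerivAt_prod_iterate_deriv {g : ι → 𝕜 → 𝔸} (hg : ∀ i, ContDiff 𝕜 ∞ (g i))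
    (p : ι → ℕ) (x : 𝕜) :
    HasDerivAt (fun y => ∏ i, deriv^[p i] (g i) y)
      (∑ r, ∏ i, deriv^[(p + Pi.single r 1 : ι → ℕ) i] (g i) x) x := by
  have hd (i : ι) : HasDerivAt (deriv^[p i] (g i)) (deriv^[p i + 1] (g i) x) x := by
    rw [Function.iterate_succ_apply']
    exact (((hg i).iterate_deriv (p i)).differentiable (by simp)).differentiableAt.hasDerivAt
  convert HasDerivAt.fun_finsetProd fun i _ => hd i using 1
  refine sum_congr rfl fun r _ => ?_
  rw [← mul_prod_erase univ _ (mem_univ r), smul_eq_mul, mul_comm]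
  congr 1
  · refine prod_congr rfl fun i hi => ?_
    simp [ne_of_mem_erase hi]
  · simp

end IteratedDerivatives

namespace NLSHierarchy

noncomputable section

/-- Forms are only ever evaluated on Schwartz inputs, so that all monomials are smooth. -/
abbrev Form := (ℕ → 𝓢(ℝ, ℂ)) → (ℕ → 𝓢(ℝ, ℂ)) → ℝ → ℂ

abbrev Idx (k : ℕ) := (Fin k → ℕ) × (Fin (k - 1) → ℕ)

def Idx.degree {k : ℕ} (p : Idx k) : ℤ :=
  (∑ r : Fin k, (p.1 r : ℤ)) + ∑ r : Fin (k - 1), (p.2 r : ℤ)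

def monomial (k : ℕ) (p : Idx k) : Form := fun φ ψ x =>
  (∏ r : Fin k, deriv^[p.1 r] (φ (r + 1)) x) * ∏ r : Fin (k - 1), deriv^[p.2 r] (ψ (r + 2)) x

def homogeneous (k : ℕ) (d : ℤ) : Submodule ℝ Form :=
  Submodule.span ℝ (monomial k '' {p | p.degree = d})

def Form.deriv (f : Form) : Form := fun φ ψ => _root_.deriv (f φ ψ)

def Form.splice (l : ℕ) (f g : Form) : Form := fun φ ψ x =>
  ψ (l + 1) x * f φ ψ x * g (fun i => φ (l + i)) (fun i => ψ (l + i)) x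

theorem Idx.degree_add {k : ℕ} (p q : Idx k) : (p + q).degree = p.degree + q.degree := by
  simp only [degree, Prod.fst_add, Prod.snd_add, Pi.add_apply, Nat.cast_add, sum_add_distrib]
  ring

theorem Idx.degree_single_fst {k : ℕ} (r : Fin k) :
    Idx.degree (k := k) (Pi.single r 1, 0) = 1 := by
  simp [degree, Pi.single_apply]

theorem Idx.degree_single_snd {k : ℕ} (r : Fin (k - 1)) :
    Idx.degree (k := k) (0, Pi.single r 1) = 1 := by
  simp [degree, Pi.single_apply]

theorem hasDerivAt_monomial {k : ℕ} (p : Idx k) (φ ψ : ℕ → 𝓢(ℝ, ℂ)) (x : ℝ) :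
    HasDerivAt (monomial k p φ ψ)
      ((∑ r, monomial k (p + (Pi.single r 1, 0)) φ ψ x) +
        ∑ r, monomial k (p + (0, Pi.single r 1)) φ ψ x) x := by
  have hφ := hasDerivAt_prod_iterate_deriv (fun r : Fin k => (φ (r + 1)).smooth ⊤) p.1 x
  have hψ := hasDerivAt_prod_iterate_deriv (fun r : Fin (k - 1) => (ψ (r + 2)).smooth ⊤) p.2 x
  refine (hφ.mul hψ).congr_deriv ?_
  simp [monomial, sum_mul, mul_sum]

/-- The slot added by `Fin.snoc` is the undifferentiated factor `ψ (l + 2)` that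
`Form.splice (l + 1)` inserts between the two blocks. -/
def Idx.append {l j : ℕ} (p : Idx (l + 1)) (q : Idx (j + 1)) : Idx (l + 1 + (j + 1)) :=
  (Fin.append p.1 q.1, Fin.append (Fin.snoc p.2 0) q.2)

theorem Idx.degree_append {l j : ℕ} (p : Idx (l + 1)) (q : Idx (j + 1)) :
    (p.append q).degree = p.degree + q.degree := by
  simp only [degree, append, Nat.add_one_sub_one, Nat.add_succ_sub_one, Fin.sum_univ_add,
    Fin.sum_univ_castSucc, Fin.append_left, Fin.append_right, Fin.snoc_castSucc, Fin.snoc_last,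
    CharP.cast_eq_zero, add_zero]
  ring

theorem splice_monomial {l j : ℕ} (p : Idx (l + 1)) (q : Idx (j + 1)) :
    Form.splice (l + 1) (monomial (l + 1) p) (monomial (j + 1) q) =
      monomial (l + 1 + (j + 1)) (p.append q) := by
  funext φ ψ x
  simp only [Form.splice, monomial, Idx.append, Nat.add_one_sub_one, Nat.add_succ_sub_one,
    Fin.prod_univ_add, Fin.prod_univ_castSucc, Fin.append_left, Fin.append_right,
    Fin.snoc_castSucc, Fin.snoc_last, Fin.val_castSucc, Fin.val_last, Fin.val_castAdd,
    Fin.val_natAdd, Function.iterate_zero, id_eq, add_assoc]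
  ring

theorem Form.deriv_smul (c : ℂ) (f : Form) : Form.deriv (c • f) = c • Form.deriv f := by
  funext φ ψ
  exact deriv_const_mul_field' c

theorem differentiable_of_mem_homogeneous {k : ℕ} {d : ℤ} {f : Form}
    (hf : f ∈ homogeneous k d) (φ ψ : ℕ → 𝓢(ℝ, ℂ)) : Differentiable ℝ (f φ ψ) := by
  induction hf using Submodule.span_induction with
  | mem _ h =>
    obtain ⟨p, -, rfl⟩ := h
    exact fun x => (hasDerivAt_monomial p φ ψ x).differentiableAt
  | zero => exact differentiable_const 0
  | add _ _ _ _ hf hg => exact hf.add hg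
  | smul a _ _ hf => exact hf.const_smul a

theorem Form.deriv_mem_homogeneous {k : ℕ} {d : ℤ} {f : Form} (hf : f ∈ homogeneous k d) :
    Form.deriv f ∈ homogeneous k (d + 1) := by
  induction hf using Submodule.span_induction with
  | mem _ h =>
    obtain ⟨p, hp : p.degree = d, rfl⟩ := h
    have hderiv : Form.deriv (monomial k p) =
        (∑ r, monomial k (p + (Pi.single r 1, 0))) +
          ∑ r, monomial k (p + (0, Pi.single r 1)) := by
      funext φ ψ x
      simpa [Form.deriv] using (hasDerivAt_monomial p φ ψ x).deriv
    rw [hderiv]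
    refine add_mem (sum_mem fun r _ => ?_) (sum_mem fun r _ => ?_) <;>
      refine Submodule.subset_span ⟨_, ?_, rfl⟩
    · simp [Idx.degree_add, Idx.degree_single_fst, hp]
    · simp [Idx.degree_add, Idx.degree_single_snd, hp]
  | zero =>
    have : Form.deriv 0 = 0 := by funext φ ψ; exact deriv_const' 0
    rw [this]
    exact zero_mem _
  | add f g hf hg hf' hg' =>
    have : Form.deriv (f + g) = Form.deriv f + Form.deriv g := by
      funext φ ψ x
      exact deriv_add (differentiable_of_mem_homogeneous hf φ ψ x)
        (differentiable_of_mem_homogeneous hg φ ψ x)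
    rw [this]
    exact add_mem hf' hg'
  | smul a f _ hf' =>
    rw [← Complex.coe_smul, Form.deriv_smul, Complex.coe_smul]
    exact Submodule.smul_mem _ a hf'

theorem Form.splice_smul_smul (l : ℕ) (a b : ℂ) (f g : Form) :
    Form.splice l (a • f) (b • g) = (a * b) • Form.splice l f g := by
  funext φ ψ x
  simp only [Form.splice, Pi.smul_apply, smul_eq_mul]
  ring

def Form.spliceₗ (l : ℕ) : Form →ₗ[ℝ] Form →ₗ[ℝ] Form :=
  LinearMap.mk₂ ℝ (Form.splice l)
    (fun _ _ _ => by funext φ ψ x; simp only [Form.splice, Pi.add_apply]; ring)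
    (fun _ _ _ => by funext φ ψ x; simp only [Form.splice, Pi.smul_apply, Complex.real_smul]; ring)
    (fun _ _ _ => by funext φ ψ x; simp only [Form.splice, Pi.add_apply]; ring)
    (fun _ _ _ => by funext φ ψ x; simp only [Form.splice, Pi.smul_apply, Complex.real_smul]; ring)

theorem Form.splice_mem_homogeneous {l j k : ℕ} {d e : ℤ} {f g : Form}
    (hl : 1 ≤ l) (hj : 1 ≤ j) (hk : l + j = k) (hf : f ∈ homogeneous l d)
    (hg : g ∈ homogeneous j e) :
    Form.splice l f g ∈ homogeneous k (d + e) := by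
  obtain ⟨l, rfl⟩ := Nat.exists_eq_add_of_le' hl
  obtain ⟨j, rfl⟩ := Nat.exists_eq_add_of_le' hj
  subst hk
  have hmem := Submodule.apply_mem_map₂ (Form.spliceₗ (l + 1)) hf hg
  rw [homogeneous, homogeneous, Submodule.map₂_span_span] at hmem
  refine Submodule.span_le.2 ?_ hmem
  rintro _ ⟨_, ⟨p, hp : p.degree = d, rfl⟩, _, ⟨q, hq : q.degree = e, rfl⟩, rfl⟩
  have hpq : (p.append q).degree = d + e := by rw [Idx.degree_append, hp, hq]
  exact Submodule.subset_span ⟨p.append q, hpq, (splice_monomial p q).symm⟩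

theorem mem_homogeneous_of_recursion (κ : ℝ) (V : ℕ → ℕ → Form) (h₁ : V 1 1 = monomial 1 0)
    (h₂ : ∀ k, 2 ≤ k → V 1 k = 0)
    (hrec : ∀ n k, 1 ≤ n → 1 ≤ k → V (n + 1) k = -Form.deriv (V n k) -
      κ • ∑ m ∈ Ico 1 n, ∑ l ∈ Ico 1 k, Form.splice l (V m l) (V (n - m) (k - l))) :
    ∀ n k : ℕ, 1 ≤ n → 1 ≤ k → V n k ∈ homogeneous k ((n : ℤ) - 1 - 2 * ((k : ℤ) - 1)) := by
  intro n
  induction n using Nat.strong_induction_on with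
  | _ n ih =>
  intro k hn hk
  rcases eq_or_lt_of_le hn with rfl | hn
  · obtain rfl | hk := eq_or_lt_of_le hk
    · rw [h₁]
      exact Submodule.subset_span ⟨0, by simp [Idx.degree], rfl⟩
    · rw [h₂ k hk]
      exact zero_mem _
  obtain ⟨n, rfl⟩ : ∃ n', n = n' + 1 := ⟨n - 1, by omega⟩
  replace hn : 1 ≤ n := by omega
  rw [hrec n k hn hk]
  refine sub_mem (neg_mem ?_)
    (Submodule.smul_mem _ κ (sum_mem fun m hm => sum_mem fun l hl => ?_))
  · convert Form.deriv_mem_homogeneous (ih n (by omega) k hn hk) using 2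
    push_cast
    ring
  · rw [mem_Ico] at hm hl
    convert Form.splice_mem_homogeneous hl.1 (by omega) (Nat.add_sub_cancel' hl.2.le)
      (ih m (by omega) l hm.1 hl.1) (ih (n - m) (by omega) (k - l) (by omega) (by omega)) using 2
    push_cast [Nat.cast_sub hm.2.le, Nat.cast_sub hl.2.le]
    ring

def dephase (W : ℕ → ℕ → Form) (n k : ℕ) : Form := (-I) ^ (n - 1) • W n k

theorem I_pow_smul_dephase (W : ℕ → ℕ → Form) (n k : ℕ) :
    I ^ (n - 1) • dephase W n k = W n k := by
  rw [dephase, smul_smul, ← mul_pow, mul_neg, I_mul_I, neg_neg, one_pow, one_smul]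

theorem dephase_recursion (κ : ℝ) (W : ℕ → ℕ → Form)
    (hrec : ∀ n k, 1 ≤ n → 1 ≤ k → W (n + 1) k = (-I) • Form.deriv (W n k) +
      (κ : ℂ) • ∑ m ∈ Ico 1 n, ∑ l ∈ Ico 1 k, Form.splice l (W m l) (W (n - m) (k - l)))
    (n k : ℕ) (hn : 1 ≤ n) (hk : 1 ≤ k) :
    dephase W (n + 1) k = -Form.deriv (dephase W n k) -
      κ • ∑ m ∈ Ico 1 n, ∑ l ∈ Ico 1 k,
        Form.splice l (dephase W m l) (dephase W (n - m) (k - l)) := by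
  have hphase : ∀ a, (-I) ^ a * I ^ a = 1 := fun a => by
    rw [← mul_pow, neg_mul, I_mul_I, neg_neg, one_pow]
  conv_lhs => rw [dephase, hrec n k hn hk]
  simp only [← I_pow_smul_dephase W, Form.deriv_smul, Form.splice_smul_smul, smul_add, smul_sum,
    smul_smul, sub_eq_add_neg, ← sum_neg_distrib, ← Complex.coe_smul]
  congr 1
  · obtain ⟨n, rfl⟩ := Nat.exists_eq_add_of_le' hn
    rw [← neg_one_smul ℂ (Form.deriv _)]
    congr 1
    rw [Nat.add_sub_cancel, Nat.add_sub_cancel]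
    linear_combination I ^ 2 * hphase n + I_sq
  · refine sum_congr rfl fun m hm => sum_congr rfl fun l _ => ?_
    rw [mem_Ico] at hm
    obtain ⟨a, b, rfl, rfl⟩ : ∃ a b, m = a + 1 ∧ n = a + b + 2 :=
      ⟨m - 1, n - m - 1, by omega, by omega⟩
    rw [← neg_smul]
    congr 1
    rw [Nat.add_sub_cancel, Nat.add_sub_cancel, show a + b + 2 - (a + 1) - 1 = b by omega]
    linear_combination (κ : ℂ) * I ^ 2 * (-I) ^ b * I ^ b * hphase a +
      (κ : ℂ) * I ^ 2 * hphase b + (κ : ℂ) * I_sq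

theorem exists_finsupp_of_mem_homogeneous {k : ℕ} {d : ℤ} {f : Form}
    (hf : f ∈ homogeneous k d) :
    ∃ a : Idx k →₀ ℝ, (∀ p ∈ a.support, p.degree = d) ∧
      ∀ (φ ψ : ℕ → 𝓢(ℝ, ℂ)) (x : ℝ), f φ ψ x = a.sum fun p c =>
        ((c : ℂ) * ∏ r : Fin k, (deriv^[p.1 r] ⇑(φ ((r : ℕ) + 1))) x) *
          ∏ r : Fin (k - 1), (deriv^[p.2 r] ⇑(ψ ((r : ℕ) + 2))) x := by
  obtain ⟨a, ha, rfl⟩ := (Finsupp.mem_span_image_iff_linearCombination ℝ).1 hf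
  refine ⟨a, fun p hp => (Finsupp.mem_supported ℝ a).1 ha hp, fun φ ψ x => ?_⟩
  simp [Finsupp.linearCombination_apply, Finsupp.sum, monomial, Complex.real_smul, mul_assoc]

end

end NLSHierarchy

open NLSHierarchy in
/-- Structure of the multilinear components: for odd `n` (resp. even `n`),
`w n k [φ;ψ]` is a real-linear combination (resp. `i` times a real-linear combination) of
products `∏ ∂^{α_r} φ_r · ∏ ∂^{α'_r} ψ_r` over multi-index pairs `(α, α')` with
`|α| + |α'| = n - 1 - 2(k-1)`. -/
theorem nls_hierarchy_multilinear_structure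
    (κ : ℂ) (hκ : κ = 1 ∨ κ = -1)
    (w : ℕ → ℕ → (ℕ → ℝ → ℂ) → (ℕ → ℝ → ℂ) → ℝ → ℂ)
    (hw_base₁ : ∀ φ ψ : ℕ → ℝ → ℂ, w 1 1 φ ψ = φ 1)
    (hw_base₂ : ∀ k, 2 ≤ k → ∀ φ ψ : ℕ → ℝ → ℂ, w 1 k φ ψ = 0)
    (hw_rec : ∀ n k, 1 ≤ n → 1 ≤ k → ∀ (φ ψ : ℕ → ℝ → ℂ) (x : ℝ),
      w (n + 1) k φ ψ x =
        -Complex.I * deriv (w n k φ ψ) x +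
          κ * ∑ m ∈ Finset.Ico 1 n, ∑ l ∈ Finset.Ico 1 k,
            ψ (l + 1) x * w m l φ ψ x *
              w (n - m) (k - l) (fun i => φ (l + i)) (fun i => ψ (l + i)) x)
    (n k : ℕ) (hn : 1 ≤ n) (hk : 1 ≤ k) :
    (Odd n →
      ∃ a : ((Fin k → ℕ) × (Fin (k - 1) → ℕ)) →₀ ℝ,
        (∀ p ∈ a.support,
          (∑ r : Fin k, (p.1 r : ℤ)) + (∑ r : Fin (k - 1), (p.2 r : ℤ)) =
            (n : ℤ) - 1 - 2 * ((k : ℤ) - 1)) ∧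
        ∀ (φ ψ : ℕ → SchwartzMap ℝ ℂ) (x : ℝ),
          w n k (fun i => ⇑(φ i)) (fun i => ⇑(ψ i)) x =
            a.sum (fun p c =>
              ((c : ℂ) * ∏ r : Fin k, (deriv^[p.1 r] ⇑(φ ((r : ℕ) + 1))) x) *
                ∏ r : Fin (k - 1), (deriv^[p.2 r] ⇑(ψ ((r : ℕ) + 2))) x)) ∧
    (Even n →
      ∃ a : ((Fin k → ℕ) × (Fin (k - 1) → ℕ)) →₀ ℝ,
        (∀ p ∈ a.support,
          (∑ r : Fin k, (p.1 r : ℤ)) + (∑ r : Fin (k - 1), (p.2 r : ℤ)) =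
            (n : ℤ) - 1 - 2 * ((k : ℤ) - 1)) ∧
        ∀ (φ ψ : ℕ → SchwartzMap ℝ ℂ) (x : ℝ),
          w n k (fun i => ⇑(φ i)) (fun i => ⇑(ψ i)) x =
            Complex.I * a.sum (fun p c =>
              ((c : ℂ) * ∏ r : Fin k, (deriv^[p.1 r] ⇑(φ ((r : ℕ) + 1))) x) *
                ∏ r : Fin (k - 1), (deriv^[p.2 r] ⇑(ψ ((r : ℕ) + 2))) x)) := by
  set W : ℕ → ℕ → Form := fun n k φ ψ => w n k (fun i => ⇑(φ i)) (fun i => ⇑(ψ i))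
  have hκre : ((κ.re : ℝ) : ℂ) = κ := by rcases hκ with rfl | rfl <;> simp
  have hV := mem_homogeneous_of_recursion κ.re (dephase W)
    (by funext φ ψ x; simp [dephase, W, hw_base₁, monomial])
    (fun k hk => by funext φ ψ x; simp [dephase, W, hw_base₂ k hk])
    (dephase_recursion κ.re W fun n k hn hk => by
      funext φ ψ x; simp [W, hw_rec n k hn hk, Form.deriv, Form.splice, hκre]) n k hn hk
  refine ⟨fun ⟨t, ht⟩ => ?_, fun ⟨t, ht⟩ => ?_⟩
  · obtain ⟨a, ha, hfa⟩ :=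
      exists_finsupp_of_mem_homogeneous (Submodule.smul_mem _ ((-1) ^ t : ℝ) hV)
    refine ⟨a, ha, fun φ ψ x => ?_⟩
    show W n k φ ψ x = _
    rw [← I_pow_smul_dephase W n k, ← hfa, ht, Nat.add_sub_cancel, pow_mul, I_sq]
    simp only [Pi.smul_apply, smul_eq_mul, Complex.real_smul]
    push_cast
    ring
  · obtain ⟨a, ha, hfa⟩ :=
      exists_finsupp_of_mem_homogeneous (Submodule.smul_mem _ ((-1) ^ (t - 1) : ℝ) hV)
    refine ⟨a, ha, fun φ ψ x => ?_⟩
    show W n k φ ψ x = _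
    rw [← I_pow_smul_dephase W n k, ← hfa, show n - 1 = 2 * (t - 1) + 1 by omega, pow_succ,
      pow_mul, I_sq]
    simp only [Pi.smul_apply, smul_eq_mul, Complex.real_smul]
    push_cast
    ring
end

section
/- Nonconstancy of the hierarchy functionals (Lemma 5.3): Fix κ ∈ {1, −1} and n ≥ 1, and let c : ℕ → ℂ be a sequence with c_1 ≠ 0. Define, for φ_1,…,φ_k, ψ_1,…,ψ_k ∈ S(ℝ;ℂ), I_n^{(k)}[φ_1,…,φ_k; ψ_1,…,ψ_k] := ∫_ℝ ψ_1(x) · w_n^{(k)}[φ_1,…,φ_k; ψ_2,…,ψ_k](x) dx, and set I_{n,c}(φ) := ∑_{k=1}^{n} c_k · I_n^{(k)}[φ,…,φ; conj φ,…,conj φ] (k copies of φ and of conj φ). Then I_{n,c} is not identically zero on S(ℝ;ℂ): there exists φ ∈ S(ℝ;ℂ) with I_{n,c}(φ) ≠ 0. -/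
open MeasureTheory Complex

noncomputable def expax (a : ℝ) : ℝ → ℂ := fun x => Complex.exp ((a : ℂ) * x * I)

lemma hasDerivAt_expax (a x : ℝ) :
    HasDerivAt (expax a) ((a : ℂ) * I * expax a x) x := by
  have h0 : HasDerivAt (fun y : ℝ => (y : ℂ)) 1 x := by
    simpa using (hasDerivAt_id x).ofReal_comp
  have h1 : HasDerivAt (fun y : ℝ => (a : ℂ) * y * I) ((a : ℂ) * I) x := by
    simpa [mul_comm, mul_assoc, mul_left_comm] using ((h0.const_mul ((a : ℂ))).mul_const I)
  have := h1.cexp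
  unfold expax
  convert this using 1 <;> ring_nf

lemma norm_expax (a x : ℝ) : ‖expax a x‖ = 1 := by
  have : (a : ℂ) * x * I = ((a * x : ℝ) : ℂ) * I := by push_cast; ring
  rw [expax, this, Complex.norm_exp_ofReal_mul_I]

lemma conj_expax_mul (a x : ℝ) : (starRingEnd ℂ) (expax a x) * expax a x = 1 := by
  rw [expax, ← Complex.exp_conj, ← Complex.exp_add]
  have : (starRingEnd ℂ) ((a : ℂ) * x * I) + (a : ℂ) * x * I = 0 := by
    simp only [map_mul, Complex.conj_I, Complex.conj_ofReal]
    ring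
  rw [this, Complex.exp_zero]

lemma contDiff_expax (a : ℝ) : ContDiff ℝ (⊤ : ℕ∞) (expax a) := by
  apply Complex.contDiff_exp.comp
  have : ContDiff ℝ (⊤ : ℕ∞) (fun y : ℝ => (y : ℂ)) := Complex.ofRealCLM.contDiff
  exact (contDiff_const.mul this).mul contDiff_const

lemma iter_deriv_expax (a : ℝ) (m : ℕ) :
    deriv^[m] (expax a) = fun x => ((a : ℂ) * I) ^ m * expax a x := by
  induction m with
  | zero => simp
  | succ m ih =>
    rw [Function.iterate_succ', Function.comp, ih]
    funext x
    simp only [deriv_const_mul_field', (hasDerivAt_expax a x).deriv]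
    ring

lemma htg_expax (a : ℝ) : Function.HasTemperateGrowth (expax a) := by
  refine ⟨(contDiff_expax a).of_le (by simp), fun N => ⟨0, ‖(a : ℂ) * I‖ ^ N, fun x => ?_⟩⟩
  rw [norm_iteratedFDeriv_eq_norm_iteratedDeriv, iteratedDeriv_eq_iterate, iter_deriv_expax]
  have h1 : ‖((a : ℂ) * I) ^ N * expax a x‖ = ‖(a : ℂ) * I‖ ^ N := by
    rw [norm_mul, norm_pow, norm_expax, mul_one]
  simp [h1, norm_expax]

noncomputable def bump : ContDiffBump (0 : ℝ) := ⟨1, 2, one_pos, one_lt_two⟩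

noncomputable def ψ₀ : SchwartzMap ℝ ℂ where
  toFun := fun x => ((bump x : ℝ) : ℂ)
  smooth' := Complex.ofRealCLM.contDiff.comp (bump.contDiff (n := (⊤ : ℕ∞)))
  decay' := by
    intro k N
    have hsupp : HasCompactSupport (fun x : ℝ => ((bump x : ℝ) : ℂ)) :=
      (bump.hasCompactSupport).comp_left (g := fun r : ℝ => (r : ℂ)) (by simp)
    have hsm : ContDiff ℝ ((⊤ : ℕ∞) : WithTop ℕ∞) (fun x : ℝ => ((bump x : ℝ) : ℂ)) := by
      exact Complex.ofRealCLM.contDiff.comp (bump.contDiff (n := (⊤ : ℕ∞)))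
    have h1 : HasCompactSupport (fun x : ℝ => ‖x‖ ^ k * ‖iteratedFDeriv ℝ N (fun x : ℝ => ((bump x : ℝ) : ℂ)) x‖) := by
      apply HasCompactSupport.mul_left
      exact (hsupp.iteratedFDeriv N).norm
    have hcont : Continuous (fun x : ℝ => ‖x‖ ^ k * ‖iteratedFDeriv ℝ N (fun x : ℝ => ((bump x : ℝ) : ℂ)) x‖) :=
      ((continuous_norm.pow k)).mul ((hsm.continuous_iteratedFDeriv (by exact_mod_cast le_top)).norm)
    obtain ⟨C, hC⟩ := h1.exists_bound_of_continuous hcont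
    exact ⟨C, fun x => by simpa using hC x⟩

noncomputable def modψ (a : ℝ) : SchwartzMap ℝ ℂ :=
  SchwartzMap.bilinLeftCLM (ContinuousLinearMap.mul ℝ ℂ) (htg_expax a) ψ₀

lemma modψ_apply (a : ℝ) (x : ℝ) : modψ a x = ψ₀ x * expax a x := rfl


noncomputable def SD (ψ : SchwartzMap ℝ ℂ) : ℕ → SchwartzMap ℝ ℂ :=
  fun j => (SchwartzMap.derivCLM ℝ ℂ)^[j] ψ

lemma SD_coe (ψ : SchwartzMap ℝ ℂ) (j : ℕ) : ⇑(SD ψ j) = deriv^[j] (⇑ψ) := by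
  induction j with
  | zero => rfl
  | succ j ih =>
    have h1 : SD ψ (j + 1) = SchwartzMap.derivCLM ℝ ℂ (SD ψ j) := Function.iterate_succ_apply' _ _ _
    rw [h1, Function.iterate_succ_apply']
    funext x
    rw [SchwartzMap.derivCLM_apply, ih]

lemma diff_iter (ψ : SchwartzMap ℝ ℂ) (j : ℕ) : Differentiable ℝ (deriv^[j] (⇑ψ)) :=
  (SD_coe ψ j) ▸ (SD ψ j).differentiable

lemma binom_step (u e : ℂ) (p : ℕ → ℂ) (m : ℕ) :
    ∑ j ∈ Finset.range (m + 1),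
        (m.choose j : ℂ) * u ^ (m - j) * (u * (e * p j) + e * p (j + 1)) =
      ∑ j ∈ Finset.range (m + 2), ((m + 1).choose j : ℂ) * u ^ (m + 1 - j) * (e * p j) := by
  have hL : ∀ j ∈ Finset.range (m + 1),
      (m.choose j : ℂ) * u ^ (m - j) * (u * (e * p j) + e * p (j + 1)) =
        (m.choose j : ℂ) * u ^ (m + 1 - j) * (e * p j) +
          (m.choose j : ℂ) * u ^ (m - j) * (e * p (j + 1)) := by
    intro j hj
    have hj' : j ≤ m := by simpa [Nat.lt_succ_iff] using hj
    have h1 : m + 1 - j = (m - j) + 1 := by omega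
    rw [h1, pow_succ]; ring
  rw [Finset.sum_congr rfl hL, Finset.sum_add_distrib, Finset.sum_range_succ' (f := fun j =>
    ((m + 1).choose j : ℂ) * u ^ (m + 1 - j) * (e * p j))]
  have hR : ∀ j ∈ Finset.range (m + 1),
      (((m + 1).choose (j + 1) : ℕ) : ℂ) * u ^ (m + 1 - (j + 1)) * (e * p (j + 1)) =
        (m.choose j : ℂ) * u ^ (m - j) * (e * p (j + 1)) +
          (m.choose (j + 1) : ℂ) * u ^ (m - j) * (e * p (j + 1)) := by
    intro j hj
    have h2 : m + 1 - (j + 1) = m - j := by omega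
    rw [h2, Nat.choose_succ_succ]
    push_cast; ring
  rw [Finset.sum_congr rfl hR, Finset.sum_add_distrib]
  have hS1 : ∑ j ∈ Finset.range (m + 1), (m.choose j : ℂ) * u ^ (m + 1 - j) * (e * p j) =
      (∑ j ∈ Finset.range m, (m.choose (j + 1) : ℂ) * u ^ (m - j) * (e * p (j + 1))) +
        (m.choose 0 : ℂ) * u ^ (m + 1) * (e * p 0) := by
    rw [Finset.sum_range_succ' (f := fun j => (m.choose j : ℂ) * u ^ (m + 1 - j) * (e * p j))]
    congr 1
    apply Finset.sum_congr rfl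
    intro j hj
    have h3 : m + 1 - (j + 1) = m - j := by omega
    rw [h3]
  have hS3 : ∑ j ∈ Finset.range (m + 1), (m.choose (j + 1) : ℂ) * u ^ (m - j) * (e * p (j + 1)) =
      ∑ j ∈ Finset.range m, (m.choose (j + 1) : ℂ) * u ^ (m - j) * (e * p (j + 1)) := by
    rw [Finset.sum_range_succ]; simp
  rw [hS1, hS3]
  simp only [Nat.choose_zero_right, Nat.cast_one, Nat.sub_zero]
  ring

lemma leibniz_mod (a : ℝ) (ψ : SchwartzMap ℝ ℂ) (m : ℕ) :
    deriv^[m] (fun x => ψ x * expax a x) = fun x =>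
      ∑ j ∈ Finset.range (m + 1), (m.choose j : ℂ) * ((a : ℂ) * I) ^ (m - j) *
        (expax a x * deriv^[j] (⇑ψ) x) := by
  induction m with
  | zero => funext x; simp [mul_comm]
  | succ m ih =>
    funext x
    rw [Function.iterate_succ_apply', ih]
    have hterm : ∀ j : ℕ, HasDerivAt (fun y : ℝ =>
        (m.choose j : ℂ) * ((a : ℂ) * I) ^ (m - j) * (expax a y * deriv^[j] (⇑ψ) y))
        ((m.choose j : ℂ) * ((a : ℂ) * I) ^ (m - j) *
          (((a : ℂ) * I) * (expax a x * deriv^[j] (⇑ψ) x) +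
            expax a x * deriv^[j + 1] (⇑ψ) x)) x := by
      intro j
      have h2 : HasDerivAt (deriv^[j] (⇑ψ)) (deriv^[j + 1] (⇑ψ) x) x := by
        rw [Function.iterate_succ_apply' deriv j (⇑ψ)]
        exact (diff_iter ψ j x).hasDerivAt
      have h3 := ((hasDerivAt_expax a x).mul h2).const_mul
        ((m.choose j : ℂ) * ((a : ℂ) * I) ^ (m - j))
      exact h3.congr_deriv (by ring)
    have hds : deriv (fun x => ∑ j ∈ Finset.range (m + 1),
        (m.choose j : ℂ) * ((a : ℂ) * I) ^ (m - j) * (expax a x * deriv^[j] (⇑ψ) x)) x =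
        ∑ j ∈ Finset.range (m + 1),
          (m.choose j : ℂ) * ((a : ℂ) * I) ^ (m - j) *
            (((a : ℂ) * I) * (expax a x * deriv^[j] (⇑ψ) x) +
              expax a x * deriv^[j + 1] (⇑ψ) x) := by
      rw [deriv_fun_sum fun j _ => (hterm j).differentiableAt]
      exact Finset.sum_congr rfl fun j _ => (hterm j).deriv
    rw [hds]
    exact binom_step ((a : ℂ) * I) (expax a x) (fun j => deriv^[j] (⇑ψ) x) m

lemma integrand_integrable (ψ : SchwartzMap ℝ ℂ) (j : ℕ) :
    Integrable (fun x : ℝ => (starRingEnd ℂ) (ψ x) * deriv^[j] (⇑ψ) x) volume := by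
  rw [← SD_coe]
  apply ((SD ψ j).integrable (μ := volume)).bdd_mul (c := SchwartzMap.seminorm ℝ 0 0 ψ)
  · exact (Complex.continuous_conj.comp ψ.continuous).aestronglyMeasurable
  · refine Filter.Eventually.of_forall (fun x => ?_)
    rw [RingHomIsometric.norm_map]
    exact ψ.norm_le_seminorm ℝ x

lemma integral_mod (ψ : SchwartzMap ℝ ℂ) (a : ℝ) (m : ℕ) :
    ∫ x : ℝ, (starRingEnd ℂ) (ψ x * expax a x) * deriv^[m] (fun y => ψ y * expax a y) x =
      ∑ j ∈ Finset.range (m + 1), (m.choose j : ℂ) * ((a : ℂ) * I) ^ (m - j) *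
        ∫ x : ℝ, (starRingEnd ℂ) (ψ x) * deriv^[j] (⇑ψ) x := by
  have hpt : ∀ x : ℝ, (starRingEnd ℂ) (ψ x * expax a x) * deriv^[m] (fun y => ψ y * expax a y) x =
      ∑ j ∈ Finset.range (m + 1), (m.choose j : ℂ) * ((a : ℂ) * I) ^ (m - j) *
        ((starRingEnd ℂ) (ψ x) * deriv^[j] (⇑ψ) x) := by
    intro x
    rw [leibniz_mod a ψ m, Finset.mul_sum]
    apply Finset.sum_congr rfl
    intro j hj
    have h1 : (starRingEnd ℂ) (ψ x * expax a x) *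
        ((m.choose j : ℂ) * ((a : ℂ) * I) ^ (m - j) * (expax a x * deriv^[j] (⇑ψ) x)) =
        (m.choose j : ℂ) * ((a : ℂ) * I) ^ (m - j) *
          (((starRingEnd ℂ) (expax a x) * expax a x) * ((starRingEnd ℂ) (ψ x) * deriv^[j] (⇑ψ) x)) := by
      rw [map_mul]; ring
    rw [h1, conj_expax_mul, one_mul]
  rw [MeasureTheory.integral_congr_ae (Filter.Eventually.of_forall hpt)]
  rw [MeasureTheory.integral_finset_sum _ (fun j _ => ((integrand_integrable ψ j).const_mul _))]
  exact Finset.sum_congr rfl fun j _ => MeasureTheory.integral_const_mul _ _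

lemma B0_ne : (∫ x : ℝ, (starRingEnd ℂ) (ψ₀ x) * ψ₀ x) ≠ 0 := by
  have h1 : ∀ x : ℝ, (starRingEnd ℂ) (ψ₀ x) * ψ₀ x = ((bump x * bump x : ℝ) : ℂ) := by
    intro x
    rw [← Complex.normSq_eq_conj_mul_self]
    have : ψ₀ x = ((bump x : ℝ) : ℂ) := rfl
    rw [this, Complex.normSq_ofReal]
  rw [MeasureTheory.integral_congr_ae (Filter.Eventually.of_forall h1)]
  have h2 : (∫ x : ℝ, ((bump x * bump x : ℝ) : ℂ)) =
      Complex.ofReal (∫ x : ℝ, (bump x * bump x : ℝ)) := integral_ofReal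
  rw [h2]
  have hint : Integrable (fun x : ℝ => bump x * bump x) volume :=
    (bump.continuous.mul bump.continuous).integrable_of_hasCompactSupport
      (bump.hasCompactSupport.mul_left)
  have hpos : 0 < ∫ x : ℝ, bump x * bump x := by
    rw [integral_pos_iff_support_of_nonneg (fun x => mul_self_nonneg _) hint]
    have hsupp : (Function.support fun x : ℝ => bump x * bump x) = Metric.ball (0 : ℝ) bump.rOut := by
      rw [← bump.support_eq]
      ext x
      simp [Function.support, mul_self_ne_zero]
    rw [hsupp]
    exact Metric.measure_ball_pos volume 0 bump.rOut_pos
  simpa using hpos.ne'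

lemma poly_coeff_zero {s : Finset ℕ} (b : ℕ → ℂ) (e : ℕ → ℕ)
    (h : ∀ x : ℝ, ∑ k ∈ s, b k * (x : ℂ) ^ (e k) = 0) (k₀ : ℕ) (hk₀ : k₀ ∈ s)
    (hinj : ∀ k ∈ s, k ≠ k₀ → e k ≠ e k₀) : b k₀ = 0 := by
  set P : Polynomial ℂ := ∑ k ∈ s, Polynomial.C (b k) * Polynomial.X ^ (e k) with hP
  have hev : ∀ x : ℝ, P.eval (x : ℂ) = 0 := by
    intro x
    rw [hP, Polynomial.eval_finset_sum]
    simpa using h x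
  have hP0 : P = 0 := by
    apply Polynomial.eq_zero_of_infinite_isRoot
    apply Set.infinite_of_injective_forall_mem (f := fun x : ℝ => (x : ℂ))
      Complex.ofReal_injective
    intro x
    exact hev x
  have hc := congrArg (fun q : Polynomial ℂ => q.coeff (e k₀)) hP0
  simp only [hP, Polynomial.finset_sum_coeff, Polynomial.coeff_C_mul, Polynomial.coeff_X_pow,
    Polynomial.coeff_zero] at hc
  rw [Finset.sum_eq_single k₀ (fun k hk hne => by
    rw [if_neg (fun hh => hinj k hk hne hh.symm), mul_zero]) (fun h' => absurd hk₀ h'),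
    if_pos rfl, mul_one] at hc
  exact hc

section Wlemmas

variable (κ : ℂ) (w : ℕ → ℕ → (ℕ → ℝ → ℂ) → (ℕ → ℝ → ℂ) → ℝ → ℂ)
variable (hw_base₁ : ∀ φ ψ : ℕ → ℝ → ℂ, w 1 1 φ ψ = φ 1)
variable (hw_base₂ : ∀ k, 2 ≤ k → ∀ φ ψ : ℕ → ℝ → ℂ, w 1 k φ ψ = 0)
variable (hw_rec : ∀ n k, 1 ≤ n → 1 ≤ k → ∀ (φ ψ : ℕ → ℝ → ℂ) (x : ℝ),
      w (n + 1) k φ ψ x =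
        -Complex.I * deriv (w n k φ ψ) x +
          κ * ∑ m ∈ Finset.Ico 1 n, ∑ l ∈ Finset.Ico 1 k,
            ψ (l + 1) x * w m l φ ψ x *
              w (n - m) (k - l) (fun i => φ (l + i)) (fun i => ψ (l + i)) x)

include hw_base₁ hw_rec in
lemma w_one : ∀ n, 1 ≤ n → ∀ (φ ψ : ℕ → ℝ → ℂ),
    w n 1 φ ψ = fun x => (-Complex.I) ^ (n - 1) * deriv^[n - 1] (φ 1) x := by
  intro n hn
  induction n, hn using Nat.le_induction with
  | base =>
    intro φ ψ
    funext x
    simp [hw_base₁]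
  | succ n hn ih =>
    intro φ ψ
    obtain ⟨p, rfl⟩ : ∃ p, n = p + 1 := ⟨n - 1, by omega⟩
    funext x
    rw [hw_rec (p + 1) 1 (by omega) le_rfl]
    simp only [Finset.Ico_self, Finset.sum_empty, Finset.sum_const_zero, mul_zero, add_zero]
    rw [ih]
    simp only [deriv_const_mul_field', Nat.add_sub_cancel]
    rw [Function.iterate_succ_apply' deriv (p) (φ 1)]
    ring
  
include hw_base₁ hw_base₂ hw_rec in
lemma w_homog : ∀ n k, 1 ≤ n → 1 ≤ k → ∀ (φ ψ : ℕ → ℝ → ℂ) (ε : ℂ),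
    w n k (fun i x => ε * φ i x) (fun i x => ε * ψ i x) =
      fun x => ε ^ (2 * k - 1) * w n k φ ψ x := by
  intro n
  induction n using Nat.strong_induction_on with
  | _ n IH =>
    intro k hn hk φ ψ ε
    match n, hn with
    | 1, _ =>
      match k, hk with
      | 1, _ =>
        funext x
        rw [hw_base₁, hw_base₁]
        norm_num
      | (j + 2), _ =>
        funext x
        rw [hw_base₂ (j + 2) (by omega), hw_base₂ (j + 2) (by omega)]
        simp
    | (p + 2), _ =>
      funext x
      rw [hw_rec (p + 1) k (by omega) hk, hw_rec (p + 1) k (by omega) hk]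
      rw [IH (p + 1) (by omega) k (by omega) hk φ ψ ε]
      rw [deriv_const_mul_field']
      have hsum : ∀ mm ∈ Finset.Ico 1 (p + 1), ∀ l ∈ Finset.Ico 1 k,
          (fun i x => ε * ψ i x) (l + 1) x * w mm l (fun i x => ε * φ i x) (fun i x => ε * ψ i x) x *
            w (p + 1 - mm) (k - l) (fun i => (fun i x => ε * φ i x) (l + i))
              (fun i => (fun i x => ε * ψ i x) (l + i)) x =
          ε ^ (2 * k - 1) * (ψ (l + 1) x * w mm l φ ψ x *
            w (p + 1 - mm) (k - l) (fun i => φ (l + i)) (fun i => ψ (l + i)) x) := by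
        intro mm hmm l hl
        simp only [Finset.mem_Ico] at hmm hl
        have e1 : w mm l (fun i x => ε * φ i x) (fun i x => ε * ψ i x) =
            fun x => ε ^ (2 * l - 1) * w mm l φ ψ x :=
          IH mm (by omega) l (by omega) (by omega) φ ψ ε
        have e2 : w (p + 1 - mm) (k - l) (fun i => (fun i x => ε * φ i x) (l + i))
              (fun i => (fun i x => ε * ψ i x) (l + i)) =
            fun x => ε ^ (2 * (k - l) - 1) *
              w (p + 1 - mm) (k - l) (fun i => φ (l + i)) (fun i => ψ (l + i)) x :=
          IH (p + 1 - mm) (by omega) (k - l) (by omega) (by omega)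
            (fun i => φ (l + i)) (fun i => ψ (l + i)) ε
        rw [e1, e2]
        have hp : ε * ε ^ (2 * l - 1) * ε ^ (2 * (k - l) - 1) = ε ^ (2 * k - 1) := by
          rw [show ε * ε ^ (2 * l - 1) * ε ^ (2 * (k - l) - 1) =
            ε ^ (1 + (2 * l - 1) + (2 * (k - l) - 1)) from by rw [pow_add, pow_add, pow_one]]
          congr 1
          omega
        calc ε * ψ (l + 1) x * (ε ^ (2 * l - 1) * w mm l φ ψ x) *
              (ε ^ (2 * (k - l) - 1) *
                w (p + 1 - mm) (k - l) (fun i => φ (l + i)) (fun i => ψ (l + i)) x)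
            = (ε * ε ^ (2 * l - 1) * ε ^ (2 * (k - l) - 1)) * (ψ (l + 1) x * w mm l φ ψ x *
                w (p + 1 - mm) (k - l) (fun i => φ (l + i)) (fun i => ψ (l + i)) x) := by ring
          _ = ε ^ (2 * k - 1) * (ψ (l + 1) x * w mm l φ ψ x *
                w (p + 1 - mm) (k - l) (fun i => φ (l + i)) (fun i => ψ (l + i)) x) := by rw [hp]
      rw [Finset.sum_congr rfl (fun mm hmm => Finset.sum_congr rfl (fun l hl => hsum mm hmm l hl))]
      simp only [← Finset.mul_sum]
      ring

end Wlemmas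

/-- Nonconstancy of the hierarchy functionals: for any sequence `c` of complex
coefficients with `c 1 ≠ 0`, the functional
`I_{n,c}(φ) = ∑_{k=1}^n c k · ∫ conj φ · w_n^{(k)}[φ,…,φ; conj φ,…,conj φ]`
is not identically zero on Schwartz space. -/
theorem nls_hierarchy_functionals_nonconstant
    (κ : ℂ) (hκ : κ = 1 ∨ κ = -1)
    (w : ℕ → ℕ → (ℕ → ℝ → ℂ) → (ℕ → ℝ → ℂ) → ℝ → ℂ)
    (hw_base₁ : ∀ φ ψ : ℕ → ℝ → ℂ, w 1 1 φ ψ = φ 1)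
    (hw_base₂ : ∀ k, 2 ≤ k → ∀ φ ψ : ℕ → ℝ → ℂ, w 1 k φ ψ = 0)
    (hw_rec : ∀ n k, 1 ≤ n → 1 ≤ k → ∀ (φ ψ : ℕ → ℝ → ℂ) (x : ℝ),
      w (n + 1) k φ ψ x =
        -Complex.I * deriv (w n k φ ψ) x +
          κ * ∑ m ∈ Finset.Ico 1 n, ∑ l ∈ Finset.Ico 1 k,
            ψ (l + 1) x * w m l φ ψ x *
              w (n - m) (k - l) (fun i => φ (l + i)) (fun i => ψ (l + i)) x)
    (n : ℕ) (hn : 1 ≤ n) (c : ℕ → ℂ) (hc : c 1 ≠ 0) :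
    ∃ φ : SchwartzMap ℝ ℂ,
      (∑ k ∈ Finset.Icc 1 n, c k *
        ∫ x : ℝ, (starRingEnd ℂ) (φ x) *
          w n k (fun _ => ⇑φ) (fun _ => fun y => (starRingEnd ℂ) (φ y)) x) ≠ 0 := by
  by_contra hcon
  push_neg at hcon
  -- Step I: the `k = 1` coefficient vanishes for every Schwartz function
  have hA1 : ∀ φ₀ : SchwartzMap ℝ ℂ,
      (∫ x : ℝ, (starRingEnd ℂ) (φ₀ x) *
        w n 1 (fun _ => ⇑φ₀) (fun _ => fun y => (starRingEnd ℂ) (φ₀ y)) x) = 0 := by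
    intro φ₀
    set Φ : ℕ → ℝ → ℂ := fun _ => ⇑φ₀ with hΦ
    set Ψ : ℕ → ℝ → ℂ := fun _ => fun y => (starRingEnd ℂ) (φ₀ y) with hΨ
    have hval : ∀ ε : ℝ, ∑ k ∈ Finset.Icc 1 n,
        (c k * ∫ x : ℝ, (starRingEnd ℂ) (φ₀ x) * w n k Φ Ψ x) * (ε : ℂ) ^ (2 * k) = 0 := by
      intro ε
      have h0 := hcon (ε • φ₀)
      rw [← h0]
      have hcoe : ∀ y : ℝ, (ε • φ₀) y = (ε : ℂ) * φ₀ y := by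
        intro y
        rw [SchwartzMap.smul_apply, Complex.real_smul]
      have hconj : ∀ y : ℝ, (starRingEnd ℂ) ((ε • φ₀) y) =
          (ε : ℂ) * (starRingEnd ℂ) (φ₀ y) := by
        intro y
        rw [hcoe, map_mul, Complex.conj_ofReal]
      apply Finset.sum_congr rfl
      intro k hk
      simp only [Finset.mem_Icc] at hk
      have hw : w n k (fun _ => ⇑(ε • φ₀)) (fun _ => fun y => (starRingEnd ℂ) ((ε • φ₀) y)) =
          fun x => (ε : ℂ) ^ (2 * k - 1) * w n k Φ Ψ x := by
        have hfun1 : (fun _ : ℕ => ⇑(ε • φ₀)) = (fun (i : ℕ) (x : ℝ) => (ε : ℂ) * Φ i x) := by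
          funext i y
          exact hcoe y
        have hfun2 : (fun _ : ℕ => fun y => (starRingEnd ℂ) ((ε • φ₀) y)) =
            (fun (i : ℕ) (x : ℝ) => (ε : ℂ) * Ψ i x) := by
          funext i y
          exact hconj y
        rw [hfun1, hfun2]
        exact w_homog κ w hw_base₁ hw_base₂ hw_rec n k hn hk.1 Φ Ψ (ε : ℂ)
      simp only [hw]
      have hpt : ∀ x : ℝ, (starRingEnd ℂ) ((ε • φ₀) x) *
          ((ε : ℂ) ^ (2 * k - 1) * w n k Φ Ψ x) =
          (ε : ℂ) ^ (2 * k) * ((starRingEnd ℂ) (φ₀ x) * w n k Φ Ψ x) := by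
        intro x
        rw [hconj]
        rw [show (ε : ℂ) * (starRingEnd ℂ) (φ₀ x) * ((ε : ℂ) ^ (2 * k - 1) * w n k Φ Ψ x) =
          ((ε : ℂ) * (ε : ℂ) ^ (2 * k - 1)) * ((starRingEnd ℂ) (φ₀ x) * w n k Φ Ψ x) from by ring]
        congr 1
        rw [← pow_succ']
        congr 1
        omega
      rw [MeasureTheory.integral_congr_ae (Filter.Eventually.of_forall hpt),
        MeasureTheory.integral_const_mul]
      ring
    have h1 := poly_coeff_zero
      (fun k => c k * ∫ x : ℝ, (starRingEnd ℂ) (φ₀ x) * w n k Φ Ψ x)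
      (fun k => 2 * k) hval 1 (by simp [hn]) (fun k _ hne => by beta_reduce; omega)
    exact (mul_eq_zero.mp h1).resolve_left hc
  -- Step II: the (n-1)-st derivative pairing vanishes for every Schwartz function
  have hG : ∀ φ₀ : SchwartzMap ℝ ℂ,
      (∫ x : ℝ, (starRingEnd ℂ) (φ₀ x) * deriv^[n - 1] (⇑φ₀) x) = 0 := by
    intro φ₀
    have h1 := hA1 φ₀
    have hw1 : ∀ x : ℝ, (starRingEnd ℂ) (φ₀ x) *
        w n 1 (fun _ => ⇑φ₀) (fun _ => fun y => (starRingEnd ℂ) (φ₀ y)) x =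
        (-Complex.I) ^ (n - 1) * ((starRingEnd ℂ) (φ₀ x) * deriv^[n - 1] (⇑φ₀) x) := by
      intro x
      simp only [w_one κ w hw_base₁ hw_rec n hn]
      ring
    rw [MeasureTheory.integral_congr_ae (Filter.Eventually.of_forall hw1),
      MeasureTheory.integral_const_mul] at h1
    exact (mul_eq_zero.mp h1).resolve_left
      (pow_ne_zero _ (neg_ne_zero.mpr Complex.I_ne_zero))
  -- Step III: plug in modulated bump functions
  set m := n - 1 with hm
  set B : ℕ → ℂ := fun j => ∫ x : ℝ, (starRingEnd ℂ) (ψ₀ x) * deriv^[j] (⇑ψ₀) x with hB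
  have hFa : ∀ a : ℝ, ∑ j ∈ Finset.range (m + 1),
      ((m.choose j : ℂ) * Complex.I ^ (m - j) * B j) * (a : ℂ) ^ (m - j) = 0 := by
    intro a
    have h1 := hG (modψ a)
    have hcoe : ⇑(modψ a) = fun x => ψ₀ x * expax a x := funext fun x => modψ_apply a x
    simp only [hcoe] at h1
    rw [integral_mod ψ₀ a m] at h1
    rw [← h1]
    apply Finset.sum_congr rfl
    intro j _
    rw [mul_pow]
    ring
  have h2 := poly_coeff_zero
    (fun j => (m.choose j : ℂ) * Complex.I ^ (m - j) * B j)
    (fun j => m - j) hFa 0 (by simp)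
    (fun j hj hne => by
      simp only [Finset.mem_range] at hj
      beta_reduce
      omega)
  simp only [Nat.choose_zero_right, Nat.cast_one, one_mul, Nat.sub_zero] at h2
  have hB0 : B 0 = 0 := (mul_eq_zero.mp h2).resolve_left (pow_ne_zero _ Complex.I_ne_zero)
  exact B0_ne hB0
end

section
/- Variational derivative formula for the hierarchy functionals (Lemma 5.5): Fix κ ∈ {1, −1} and n ≥ 1, and let w_{n,j}^{(k),t} and w_{n,j′}^{(k),t} be partial transposes of w_n^{(k)} as in the context, with the convention w_{n,1′}^{(k),t} := w_n^{(k)}. Define Ĩ_n(f,g) := ∑_{k=1}^{n} ∫_ℝ g(x) · w_n^{(k)}[f,…,f; g,…,g](x) dx (k copies of f, k−1 copies of g). Then for all φ, ψ, δφ, δψ ∈ S(ℝ;ℂ), the function ℝ → ℂ, t ↦ Ĩ_n(φ + tδφ, ψ + tδψ), is differentiable at t = 0 with derivative ∫_ℝ δφ(x)·( ∑_{k=1}^{n} ∑_{j=1}^{k} w_{n,j}^{(k),t}[φ,…,φ (j−1 copies), ψ, φ,…,φ (k−j copies); ψ,…,ψ (k−1 copies)](x) ) dx + ∫_ℝ δψ(x)·(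 ∑_{k=1}^{n} ∑_{j=1}^{k} w_{n,j′}^{(k),t}[φ,…,φ (k copies); ψ,…,ψ (k−1 copies)](x) ) dx. -/
open MeasureTheory

namespace NLS5
open Finset

lemma schwartz_temperate (f : SchwartzMap ℝ ℂ) : Function.HasTemperateGrowth (⇑f) := by
  refine ⟨f.smooth ⊤, fun n => ?_⟩
  obtain ⟨C, hC⟩ := f.decay 0 n
  exact ⟨0, C, fun x => by simpa using hC.2 x⟩

/-- Pointwise product of Schwartz functions as a Schwartz map. -/
noncomputable def smul2 (f g : SchwartzMap ℝ ℂ) : SchwartzMap ℝ ℂ :=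
  SchwartzMap.bilinLeftCLM (ContinuousLinearMap.mul ℝ ℂ) (schwartz_temperate g) f

@[simp] lemma smul2_apply (f g : SchwartzMap ℝ ℂ) (x : ℝ) : smul2 f g x = f x * g x := rfl

def IsSch (f : ℝ → ℂ) : Prop := ∃ s : SchwartzMap ℝ ℂ, ∀ x, f x = s x

lemma IsSch.coe (s : SchwartzMap ℝ ℂ) : IsSch (⇑s) := ⟨s, fun _ => rfl⟩

lemma IsSch.eq (h : IsSch f) : ∃ s : SchwartzMap ℝ ℂ, f = ⇑s := by
  obtain ⟨s, hs⟩ := h; exact ⟨s, funext hs⟩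

lemma isSch_zero : IsSch (fun _ : ℝ => (0:ℂ)) := ⟨0, fun _ => rfl⟩

lemma IsSch.add {f g : ℝ → ℂ} (hf : IsSch f) (hg : IsSch g) : IsSch (fun x => f x + g x) := by
  obtain ⟨s, rfl⟩ := hf.eq; obtain ⟨u, rfl⟩ := hg.eq
  exact ⟨s + u, fun x => rfl⟩

lemma IsSch.mul {f g : ℝ → ℂ} (hf : IsSch f) (hg : IsSch g) : IsSch (fun x => f x * g x) := by
  obtain ⟨s, rfl⟩ := hf.eq; obtain ⟨u, rfl⟩ := hg.eq
  exact ⟨smul2 s u, fun x => rfl⟩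

lemma IsSch.const_mul {f : ℝ → ℂ} (a : ℂ) (hf : IsSch f) : IsSch (fun x => a * f x) := by
  obtain ⟨s, rfl⟩ := hf.eq
  exact ⟨a • s, fun x => rfl⟩

lemma IsSch.congr {f g : ℝ → ℂ} (hf : IsSch f) (h : ∀ x, g x = f x) : IsSch g := by
  obtain ⟨s, hs⟩ := hf; exact ⟨s, fun x => (h x).trans (hs x)⟩

lemma IsSch.sum {ι : Type*} (s : Finset ι) (f : ι → ℝ → ℂ) (h : ∀ i ∈ s, IsSch (f i)) :
    IsSch (fun x => ∑ i ∈ s, f i x) := by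
  classical
  induction s using Finset.induction with
  | empty => simpa using isSch_zero
  | insert a s' hni ih =>
    have := (h a (Finset.mem_insert_self a s')).add
      (ih (fun i hi => h i (Finset.mem_insert_of_mem hi)))
    exact this.congr fun x => by rw [Finset.sum_insert hni]

lemma IsSch.deriv {f : ℝ → ℂ} (hf : IsSch f) : IsSch (deriv f) := by
  obtain ⟨s, rfl⟩ := hf.eq
  exact ⟨SchwartzMap.derivCLM ℂ ℂ s, fun x => (SchwartzMap.derivCLM_apply (𝕜 := ℂ) (f := s) (x := x)).symm⟩

lemma IsSch.integrable {f : ℝ → ℂ} (hf : IsSch f) : Integrable f := by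
  obtain ⟨s, rfl⟩ := hf.eq; exact s.integrable

lemma IsSch.differentiable {f : ℝ → ℂ} (hf : IsSch f) : Differentiable ℝ f := by
  obtain ⟨s, rfl⟩ := hf.eq; exact s.differentiable


/-- `Rep F D c`: `F t x = ∑_{d<D} t^d c d x` with Schwartz coefficients. -/
def Rep (F : ℝ → ℝ → ℂ) (D : ℕ) (c : ℕ → ℝ → ℂ) : Prop :=
  (∀ d, IsSch (c d)) ∧ ∀ t x, F t x = ∑ d ∈ range D, (t : ℂ) ^ d * c d x

def PolyFam (F : ℝ → ℝ → ℂ) : Prop := ∃ D c, Rep F D c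

lemma Rep.mono {F D c} (h : Rep F D c) {D' : ℕ} (hD : D ≤ D') :
    Rep F D' (fun d => if d < D then c d else fun _ => 0) := by
  obtain ⟨hc, hrep⟩ := h
  constructor
  · intro d; by_cases hd : d < D <;> simp [hd, hc d, isSch_zero]
  · intro t x
    rw [hrep t x]
    refine ((Finset.sum_subset (Finset.range_subset_range.2 hD) ?_).symm.trans ?_).symm
    · intro d _ hd
      have : ¬ d < D := fun h => hd (Finset.mem_range.2 h)
      simp [this]
    · exact Finset.sum_congr rfl fun d hd => by simp [Finset.mem_range.1 hd]

lemma PolyFam.congr {F G : ℝ → ℝ → ℂ} (hF : PolyFam F) (h : ∀ t x, G t x = F t x) :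
    PolyFam G := by
  obtain ⟨D, c, hc, hrep⟩ := hF
  exact ⟨D, c, hc, fun t x => (h t x).trans (hrep t x)⟩

lemma PolyFam.rep_ge {F : ℝ → ℝ → ℂ} (hF : PolyFam F) (D₀ : ℕ) :
    ∃ D c, D₀ ≤ D ∧ Rep F D c := by
  obtain ⟨D, c, h⟩ := hF
  exact ⟨max D D₀, _, le_max_right _ _, h.mono (le_max_left _ _)⟩

lemma polyFam_const {g : ℝ → ℂ} (hg : IsSch g) : PolyFam (fun _ x => g x) :=
  ⟨1, fun _ => g, fun _ => hg, fun t x => by simp⟩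

lemma polyFam_lin {g h : ℝ → ℂ} (hg : IsSch g) (hh : IsSch h) :
    PolyFam (fun t x => g x + (t : ℂ) * h x) := by
  refine ⟨2, fun d => if d = 0 then g else if d = 1 then h else fun _ => 0, ?_, ?_⟩
  · intro d; rcases d with _ | _ | d <;> simp [hg, hh, isSch_zero]
  · intro t x; rw [Finset.sum_range_succ, Finset.sum_range_one]; simp

lemma PolyFam.add {F G : ℝ → ℝ → ℂ} (hF : PolyFam F) (hG : PolyFam G) :
    PolyFam (fun t x => F t x + G t x) := by
  obtain ⟨D, a, hD, ha, harep⟩ := hF.rep_ge 0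
  obtain ⟨E, b, hE, hb, hbrep⟩ := hG.rep_ge D
  obtain ⟨ha', harep'⟩ := Rep.mono ⟨ha, harep⟩ (hE : D ≤ E)
  set a' : ℕ → ℝ → ℂ := fun d => if d < D then a d else fun _ => 0 with ha'def
  refine ⟨E, fun d x => a' d x + b d x, fun d => (ha' d).add (hb d), fun t x => ?_⟩
  show F t x + G t x = _
  rw [harep' t x, hbrep t x, ← Finset.sum_add_distrib]
  exact Finset.sum_congr rfl fun d _ => by ring

lemma PolyFam.const_mul {F : ℝ → ℝ → ℂ} (A : ℂ) (hF : PolyFam F) :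
    PolyFam (fun t x => A * F t x) := by
  obtain ⟨D, c, hc, hrep⟩ := hF
  refine ⟨D, fun d x => A * c d x, fun d => (hc d).const_mul A, fun t x => ?_⟩
  show A * F t x = _
  rw [hrep t x, Finset.mul_sum]
  exact Finset.sum_congr rfl fun d _ => by ring

lemma PolyFam.sum {ι : Type} (s : Finset ι) (F : ι → ℝ → ℝ → ℂ)
    (h : ∀ i ∈ s, PolyFam (F i)) : PolyFam (fun t x => ∑ i ∈ s, F i t x) := by
  classical
  induction s using Finset.induction with
  | empty => exact (polyFam_const isSch_zero).congr (fun t x => by simp)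
  | insert i s' hni ih =>
    have h1 := h i (Finset.mem_insert_self i s')
    have h2 := ih (fun j hj => h j (Finset.mem_insert_of_mem hj))
    exact (h1.add h2).congr fun t x => by rw [Finset.sum_insert hni]

/-- Multiplication by a monomial family `t^N * a x`. -/
lemma PolyFam.monomial_mul {F : ℝ → ℝ → ℂ} (hF : PolyFam F) (N : ℕ) {a : ℝ → ℂ}
    (ha : IsSch a) : PolyFam (fun t x => (t:ℂ)^N * (a x * F t x)) := by
  obtain ⟨D, c, hc, hrep⟩ := hF
  refine ⟨N + D, fun d => if N ≤ d then (fun x => a x * c (d - N) x) else fun _ => 0,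
    ?_, fun t x => ?_⟩
  · intro d; by_cases hd : N ≤ d <;> simp [hd, ha.mul (hc _), isSch_zero]
  · show (t:ℂ)^N * (a x * F t x) = _
    have key : ∑ d ∈ Finset.range (N+D),
          (t:ℂ)^d * (if N ≤ d then (fun x => a x * c (d - N) x) else fun _ => 0) x
        = ∑ d ∈ Finset.Ico N (N+D),
          (t:ℂ)^d * (if N ≤ d then (fun x => a x * c (d - N) x) else fun _ => 0) x := by
      rw [Finset.range_eq_Ico]
      refine (Finset.sum_subset (Finset.Ico_subset_Ico (Nat.zero_le N) le_rfl)
        (fun d hmem hd => ?_)).symm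
      have h1 := Finset.mem_Ico.1 hmem
      have h2 : ¬ (N ≤ d ∧ d < N + D) := fun h => hd (Finset.mem_Ico.2 h)
      have : ¬ N ≤ d := by omega
      simp [this]
    rw [key, Finset.sum_Ico_eq_sum_range]
    simp only [Nat.add_sub_cancel_left, Nat.add_sub_cancel]
    rw [hrep t x, Finset.mul_sum, Finset.mul_sum]
    refine (Finset.sum_congr rfl fun d _ => ?_).symm
    have hle : N ≤ N + d := Nat.le_add_right N d
    rw [if_pos hle]
    simp only [pow_add]
    ring

lemma rep_mul_aux (G : ℝ → ℝ → ℂ) (hG : PolyFam G) :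
    ∀ (D : ℕ) (a : ℕ → ℝ → ℂ), (∀ d, IsSch (a d)) →
      PolyFam (fun t x => (∑ d ∈ range D, (t:ℂ)^d * a d x) * G t x) := by
  intro D
  induction D with
  | zero => intro a _; exact (polyFam_const isSch_zero).congr (fun t x => by simp)
  | succ D ih =>
    intro a ha
    have h1 := ih a ha
    have h2 := hG.monomial_mul D (ha D)
    exact (h1.add h2).congr fun t x => by
      rw [Finset.sum_range_succ]; ring

lemma PolyFam.mul {F G : ℝ → ℝ → ℂ} (hF : PolyFam F) (hG : PolyFam G) :
    PolyFam (fun t x => F t x * G t x) := by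
  obtain ⟨D, a, ha, harep⟩ := hF
  exact (rep_mul_aux G hG D a ha).congr fun t x => by rw [harep t x]


lemma hasDerivAt_monomial (d : ℕ) (a : ℂ) (t₀ : ℝ) :
    HasDerivAt (fun t : ℝ => (t:ℂ)^d * a) (((d:ℂ) * (t₀:ℂ)^(d-1)) * a) t₀ :=
  ((hasDerivAt_pow d ((t₀:ℝ):ℂ)).comp_ofReal).mul_const a

lemma Rep.apply_zero {F D c} (h : Rep F D c) (hD : 1 ≤ D) (x : ℝ) : F 0 x = c 0 x := by
  rw [h.2 0 x]
  rw [Finset.sum_eq_single 0]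
  · simp
  · intro d _ hd
    simp [zero_pow hd]
  · intro h0; exact absurd (Finset.mem_range.2 hD) h0

lemma Rep.hasDerivAt {F D c} (h : Rep F D c) (hD : 2 ≤ D) (x : ℝ) :
    HasDerivAt (fun t : ℝ => F t x) (c 1 x) 0 := by
  have hfun : (fun t : ℝ => F t x) = fun t : ℝ => ∑ d ∈ range D, (t:ℂ)^d * c d x :=
    funext fun t => h.2 t x
  rw [hfun]
  have hsum := HasDerivAt.fun_sum (u := Finset.range D)
    (A := fun d (t : ℝ) => (t:ℂ)^d * c d x)
    (A' := fun d => ((d:ℂ) * ((0:ℝ):ℂ)^(d-1)) * c d x)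
    (fun d _ => hasDerivAt_monomial d (c d x) 0)
  have hval : ∑ d ∈ range D, ((d:ℂ) * ((0:ℝ):ℂ)^(d-1)) * c d x = c 1 x := by
    rw [Finset.sum_eq_single 1]
    · simp
    · intro d _ hd
      match d, hd with
      | 0, _ => simp
      | (m+2), _ => simp [zero_pow]
    · intro h1; exact absurd (Finset.mem_range.2 (by omega)) h1
  rwa [hval] at hsum

lemma Rep.deriv_eq {F D c} (h : Rep F D c) {g : ℝ → ℂ}
    (hg : ∀ x, HasDerivAt (fun t : ℝ => F t x) (g x) 0) (hD : 2 ≤ D) :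
    ∀ x, g x = c 1 x :=
  fun x => (hg x).unique (h.hasDerivAt hD x)

lemma Rep.deriv_x {F D c} (h : Rep F D c) (t x : ℝ) :
    deriv (F t) x = ∑ d ∈ range D, (t:ℂ)^d * deriv (c d) x := by
  have hfun : F t = fun x : ℝ => ∑ d ∈ range D, (t:ℂ)^d * c d x :=
    funext fun x => h.2 t x
  rw [hfun]
  rw [deriv_fun_sum (fun d _ => ((h.1 d).differentiable x).const_mul _)]
  exact Finset.sum_congr rfl fun d _ =>
    deriv_const_mul _ ((h.1 d).differentiable x)


lemma PolyFam.deriv_x {F : ℝ → ℝ → ℂ} (hF : PolyFam F) :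
    PolyFam (fun t x => deriv (F t) x) := by
  obtain ⟨D, c, hc, hrep⟩ := hF
  exact ⟨D, fun d => deriv (c d), fun d => (hc d).deriv,
    fun t x => Rep.deriv_x ⟨hc, hrep⟩ t x⟩

/-- constant argument family -/
noncomputable def cst (f : SchwartzMap ℝ ℂ) : ℕ → ℝ → ℂ := fun _ => ⇑f

/-- argument family updated in slot `j` -/
noncomputable def updf (f g : SchwartzMap ℝ ℂ) (j : ℕ) : ℕ → ℝ → ℂ := Function.update (cst f) j ⇑g

/-- perturbed constant argument family -/
noncomputable def pert (f g : SchwartzMap ℝ ℂ) (t : ℝ) : ℕ → ℝ → ℂ := fun _ y => f y + (t:ℂ) * g y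

lemma pert_zero (f g : SchwartzMap ℝ ℂ) : pert f g 0 = cst f := by
  funext i y; simp [pert, cst]

lemma shift_updf_of_lt {l j : ℕ} (h : l < j) (f g : SchwartzMap ℝ ℂ) :
    (fun i => updf f g j (l + i)) = updf f g (j - l) := by
  funext i
  by_cases hij : l + i = j
  · have hij2 : i = j - l := by omega
    simp only [updf, Function.update_apply, hij2]
    have : l + (j - l) = j := by omega
    simp [this]
  · have hij2 : i ≠ j - l := by omega
    simp [updf, Function.update_apply, hij, hij2, cst]

lemma updf_apply_ne {j i : ℕ} (h : i ≠ j) (f g : SchwartzMap ℝ ℂ) :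
    updf f g j i = ⇑f := by
  simp [updf, Function.update_apply, h, cst]

lemma updf_apply_self (j : ℕ) (f g : SchwartzMap ℝ ℂ) : updf f g j j = ⇑g := by
  simp [updf]

section W

variable {κ : ℂ} {w : ℕ → ℕ → (ℕ → ℝ → ℂ) → (ℕ → ℝ → ℂ) → ℝ → ℂ}

/-- Locality: `w n k` depends only on `φ 1,…,φ k` and `ψ 2,…,ψ k`. -/
lemma loc
    (hw_base₁ : ∀ φ ψ : ℕ → ℝ → ℂ, w 1 1 φ ψ = φ 1)
    (hw_base₂ : ∀ k, 2 ≤ k → ∀ φ ψ : ℕ → ℝ → ℂ, w 1 k φ ψ = 0)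
    (hw_rec : ∀ n k, 1 ≤ n → 1 ≤ k → ∀ (φ ψ : ℕ → ℝ → ℂ) (x : ℝ),
      w (n + 1) k φ ψ x =
        -Complex.I * deriv (w n k φ ψ) x +
          κ * ∑ m ∈ Finset.Ico 1 n, ∑ l ∈ Finset.Ico 1 k,
            ψ (l + 1) x * w m l φ ψ x *
              w (n - m) (k - l) (fun i => φ (l + i)) (fun i => ψ (l + i)) x) :
    ∀ n, 1 ≤ n → ∀ k, 1 ≤ k → ∀ (φ₁ ψ₁ φ₂ ψ₂ : ℕ → ℝ → ℂ),
      (∀ i, 1 ≤ i → i ≤ k → φ₁ i = φ₂ i) → (∀ i, 2 ≤ i → i ≤ k → ψ₁ i = ψ₂ i) →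
      w n k φ₁ ψ₁ = w n k φ₂ ψ₂ := by
  intro n
  induction n using Nat.strong_induction_on with
  | _ n IH =>
    intro hn k hk φ₁ ψ₁ φ₂ ψ₂ hφ hψ
    match n, hn with
    | 0, h => exact absurd h (by omega)
    | 1, _ =>
      rcases eq_or_lt_of_le hk with hk1 | hk2
      · rw [← hk1, hw_base₁, hw_base₁]
        exact hφ 1 le_rfl hk
      · rw [hw_base₂ k hk2, hw_base₂ k hk2]
    | (m+2), _ =>
      have hm : 1 ≤ m + 1 := by omega
      funext x
      rw [hw_rec (m+1) k hm hk φ₁ ψ₁ x, hw_rec (m+1) k hm hk φ₂ ψ₂ x]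
      have hder : w (m+1) k φ₁ ψ₁ = w (m+1) k φ₂ ψ₂ :=
        IH (m+1) (by omega) hm k hk _ _ _ _ hφ hψ
      rw [hder]
      congr 1
      congr 1
      refine Finset.sum_congr rfl fun m' hm' => Finset.sum_congr rfl fun l hl => ?_
      have hm'1 := (Finset.mem_Ico.1 hm').1
      have hm'2 := (Finset.mem_Ico.1 hm').2
      have hl1 := (Finset.mem_Ico.1 hl).1
      have hl2 := (Finset.mem_Ico.1 hl).2
      have e1 : ψ₁ (l+1) = ψ₂ (l+1) := hψ (l+1) (by omega) (by omega)
      have e2 : w m' l φ₁ ψ₁ = w m' l φ₂ ψ₂ :=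
        IH m' (by omega) (by omega) l (by omega) _ _ _ _
          (fun i h1 h2 => hφ i h1 (by omega)) (fun i h1 h2 => hψ i h1 (by omega))
      have e3 : w (m + 1 - m') (k - l) (fun i => φ₁ (l + i)) (fun i => ψ₁ (l + i))
          = w (m + 1 - m') (k - l) (fun i => φ₂ (l + i)) (fun i => ψ₂ (l + i)) :=
        IH (m + 1 - m') (by omega) (by omega) (k - l) (by omega) _ _ _ _
          (fun i h1 h2 => hφ (l+i) (by omega) (by omega))
          (fun i h1 h2 => hψ (l+i) (by omega) (by omega))
      rw [e1, e2, e3]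


lemma Icc_one_eq_Ioc (b : ℕ) : Finset.Icc 1 b = Finset.Ioc 0 b := by
  ext i; simp [Nat.lt_iff_add_one_le]

lemma Icc_two_eq_Ioc (b : ℕ) : Finset.Icc 2 b = Finset.Ioc 1 b := by
  ext i; simp; omega

lemma regroupφ {k l : ℕ} (_hl1 : 1 ≤ l) (hl2 : l < k) (U U' : ℕ → ℂ) (W W' : ℂ) :
    ∑ j ∈ Finset.Icc 1 k, (if j ≤ l then U j * W' else W * U' (j - l))
      = (∑ j ∈ Finset.Icc 1 l, U j) * W' + W * ∑ j ∈ Finset.Icc 1 (k - l), U' j := by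
  rw [Icc_one_eq_Ioc, ← Finset.sum_Ioc_consecutive _ (Nat.zero_le l) (le_of_lt hl2)]
  congr 1
  · rw [Icc_one_eq_Ioc, Finset.sum_mul]
    refine Finset.sum_congr rfl fun j hj => ?_
    rw [if_pos (Finset.mem_Ioc.1 hj).2]
  · rw [Finset.mul_sum]
    have h1 : Finset.Ioc l k = Finset.Ico (l+1) (k+1) := by ext i; simp
    have h2 : Finset.Icc 1 (k-l) = Finset.Ico 1 (k-l+1) := by ext i; simp
    rw [h1, h2, Finset.sum_Ico_eq_sum_range, Finset.sum_Ico_eq_sum_range]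
    rw [show k + 1 - (l + 1) = k - l by omega, show k - l + 1 - 1 = k - l from by omega]
    refine Finset.sum_congr rfl fun i _ => ?_
    rw [if_neg (by omega), show l + 1 + i - l = 1 + i by omega]

lemma regroupψ {k l : ℕ} (hl1 : 1 ≤ l) (hl2 : l < k) (U U' : ℕ → ℂ) (W W' a b : ℂ) :
    ∑ j ∈ Finset.Icc 2 k,
        (if j ≤ l then b * (U j * W')
         else if j = l + 1 then a * (W * W')
         else b * (W * U' (j - l)))
      = a * (W * W') + b * ((∑ j ∈ Finset.Icc 2 l, U j) * W')
          + b * (W * ∑ j ∈ Finset.Icc 2 (k - l), U' j) := by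
  rw [Icc_two_eq_Ioc, ← Finset.sum_Ioc_consecutive _ (hl1) (le_of_lt hl2)]
  rw [add_comm (a * (W * W')) _, add_assoc]
  congr 1
  · rw [Icc_two_eq_Ioc]
    have hcg : ∀ j ∈ Finset.Ioc 1 l,
        (if j ≤ l then b * (U j * W')
         else if j = l + 1 then a * (W * W')
         else b * (W * U' (j - l))) = b * (U j * W') :=
      fun j hj => if_pos (Finset.mem_Ioc.1 hj).2
    rw [Finset.sum_congr rfl hcg, Finset.sum_mul, Finset.mul_sum]
  · have h1 : Finset.Ioc l k = Finset.Icc (l+1) k := by ext i; simp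
    rw [h1, Finset.Icc_eq_cons_Ioc (by omega : l + 1 ≤ k), Finset.sum_cons]
    congr 1
    · rw [if_neg (by omega), if_pos rfl]
    · rw [Finset.mul_sum, Finset.mul_sum]
      have h2 : Finset.Ioc (l+1) k = Finset.Ico (l+2) (k+1) := by ext i; simp; omega
      have h3 : Finset.Icc 2 (k-l) = Finset.Ico 2 (k-l+1) := by ext i; simp
      rw [h2, h3, Finset.sum_Ico_eq_sum_range, Finset.sum_Ico_eq_sum_range]
      rw [show k + 1 - (l + 2) = k - l - 1 by omega, show k - l + 1 - 2 = k - l - 1 by omega]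
      refine Finset.sum_congr rfl fun i _ => ?_
      rw [if_neg (by omega), if_neg (by omega), show l + 2 + i - l = 2 + i by omega]

variable (w) (φ ψ δφ δψ : SchwartzMap ℝ ℂ)

/-- first-variation slot sum -/
noncomputable def slotSum (n k : ℕ) : ℝ → ℂ := fun x =>
  (∑ j ∈ Finset.Icc 1 k, w n k (updf φ δφ j) (cst ψ) x) +
    ∑ j ∈ Finset.Icc 2 k, w n k (cst φ) (updf ψ δψ j) x

/-- The full induction package. -/
def Good (n : ℕ) : Prop := ∀ k, 1 ≤ k →
  IsSch (w n k (cst φ) (cst ψ)) ∧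
  (∀ j, 1 ≤ j → j ≤ k → IsSch (w n k (updf φ δφ j) (cst ψ))) ∧
  (∀ j, 2 ≤ j → j ≤ k → IsSch (w n k (cst φ) (updf ψ δψ j))) ∧
  PolyFam (fun t x => w n k (pert φ δφ t) (pert ψ δψ t) x) ∧
  ∀ x, HasDerivAt (fun t : ℝ => w n k (pert φ δφ t) (pert ψ δψ t) x)
    (slotSum w φ ψ δφ δψ n k x) 0

variable {w φ ψ δφ δψ}

lemma good_one
    (hw_base₁ : ∀ φ' ψ' : ℕ → ℝ → ℂ, w 1 1 φ' ψ' = φ' 1)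
    (hw_base₂ : ∀ k, 2 ≤ k → ∀ φ' ψ' : ℕ → ℝ → ℂ, w 1 k φ' ψ' = 0) :
    Good w φ ψ δφ δψ 1 := by
  intro k hk
  rcases eq_or_lt_of_le hk with hk1 | hk2
  · subst hk1
    refine ⟨?_, ?_, ?_, ?_, ?_⟩
    · rw [hw_base₁]; exact IsSch.coe φ
    · intro j hj1 hj2
      have hj : j = 1 := le_antisymm hj2 hj1
      subst hj
      rw [hw_base₁, updf_apply_self]
      exact IsSch.coe δφ
    · intro j hj1 hj2; omega
    · refine (polyFam_lin (IsSch.coe φ) (IsSch.coe δφ)).congr fun t x => ?_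
      rw [hw_base₁]; rfl
    · intro x
      have h1 : (fun t : ℝ => w 1 1 (pert φ δφ t) (pert ψ δψ t) x)
          = fun t : ℝ => φ x + (t:ℂ) * δφ x := by
        funext t; rw [hw_base₁]; rfl
      have h2 : slotSum w φ ψ δφ δψ 1 1 x = δφ x := by
        simp only [slotSum, Finset.Icc_self, Finset.sum_singleton,
          show Finset.Icc 2 1 = (∅ : Finset ℕ) by rfl, Finset.sum_empty, add_zero]
        rw [hw_base₁, updf_apply_self]
      rw [h1, h2]
      have hd : HasDerivAt (fun t : ℝ => (t:ℂ)) ((1:ℂ)) (0:ℝ) := by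
        simpa using (hasDerivAt_id (0:ℝ)).ofReal_comp
      simpa using (hd.mul_const (δφ x)).const_add (φ x)
  · refine ⟨?_, ?_, ?_, ?_, ?_⟩
    · rw [hw_base₂ k hk2]; exact isSch_zero
    · intro j _ _; rw [hw_base₂ k hk2]; exact isSch_zero
    · intro j _ _; rw [hw_base₂ k hk2]; exact isSch_zero
    · refine (polyFam_const isSch_zero).congr fun t x => ?_
      rw [hw_base₂ k hk2]; rfl
    · intro x
      have h1 : (fun t : ℝ => w 1 k (pert φ δφ t) (pert ψ δψ t) x)
          = fun _ : ℝ => (0:ℂ) := by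
        funext t; rw [hw_base₂ k hk2]; rfl
      have h2 : slotSum w φ ψ δφ δψ 1 k x = 0 := by
        simp only [slotSum, hw_base₂ k hk2]
        simp
      rw [h1, h2]
      exact hasDerivAt_const 0 0


lemma good_step
    (hw_base₁ : ∀ φ' ψ' : ℕ → ℝ → ℂ, w 1 1 φ' ψ' = φ' 1)
    (hw_base₂ : ∀ k, 2 ≤ k → ∀ φ' ψ' : ℕ → ℝ → ℂ, w 1 k φ' ψ' = 0)
    (hw_rec : ∀ n k, 1 ≤ n → 1 ≤ k → ∀ (φ' ψ' : ℕ → ℝ → ℂ) (x : ℝ),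
      w (n + 1) k φ' ψ' x =
        -Complex.I * deriv (w n k φ' ψ') x +
          κ * ∑ m ∈ Finset.Ico 1 n, ∑ l ∈ Finset.Ico 1 k,
            ψ' (l + 1) x * w m l φ' ψ' x *
              w (n - m) (k - l) (fun i => φ' (l + i)) (fun i => ψ' (l + i)) x)
    {N : ℕ} (hN : 1 ≤ N)
    (IH : ∀ m, 1 ≤ m → m ≤ N → Good w φ ψ δφ δψ m) :
    Good w φ ψ δφ δψ (N + 1) := by
  have IH1 : ∀ m l, 1 ≤ m → m ≤ N → 1 ≤ l → IsSch (w m l (cst φ) (cst ψ)) :=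
    fun m l h1 h2 h3 => ((IH m h1 h2) l h3).1
  have IH2 : ∀ m l j, 1 ≤ m → m ≤ N → 1 ≤ j → j ≤ l →
      IsSch (w m l (updf φ δφ j) (cst ψ)) :=
    fun m l j h1 h2 h3 h4 => ((IH m h1 h2) l (le_trans h3 h4)).2.1 j h3 h4
  have IH3 : ∀ m l j, 1 ≤ m → m ≤ N → 2 ≤ j → j ≤ l →
      IsSch (w m l (cst φ) (updf ψ δψ j)) :=
    fun m l j h1 h2 h3 h4 => ((IH m h1 h2) l (by omega)).2.2.1 j h3 h4
  have IH4 : ∀ m l, 1 ≤ m → m ≤ N → 1 ≤ l →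
      PolyFam (fun t x => w m l (pert φ δφ t) (pert ψ δψ t) x) :=
    fun m l h1 h2 h3 => ((IH m h1 h2) l h3).2.2.2.1
  have IH5 : ∀ m l, 1 ≤ m → m ≤ N → 1 ≤ l → ∀ x,
      HasDerivAt (fun t : ℝ => w m l (pert φ δφ t) (pert ψ δψ t) x)
        (slotSum w φ ψ δφ δψ m l x) 0 :=
    fun m l h1 h2 h3 => ((IH m h1 h2) l h3).2.2.2.2
  intro k hk
  -- recursion identity with constant arguments
  have hcst : ∀ x, w (N+1) k (cst φ) (cst ψ) x =
      -Complex.I * deriv (w N k (cst φ) (cst ψ)) x +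
        κ * ∑ m' ∈ Finset.Ico 1 N, ∑ l ∈ Finset.Ico 1 k,
          ψ x * w m' l (cst φ) (cst ψ) x * w (N - m') (k - l) (cst φ) (cst ψ) x :=
    fun x => hw_rec N k hN hk (cst φ) (cst ψ) x
  -- recursion identity with perturbed arguments
  have hpert : ∀ (t : ℝ) x, w (N+1) k (pert φ δφ t) (pert ψ δψ t) x =
      -Complex.I * deriv (w N k (pert φ δφ t) (pert ψ δψ t)) x +
        κ * ∑ m' ∈ Finset.Ico 1 N, ∑ l ∈ Finset.Ico 1 k,
          (ψ x + (t:ℂ) * δψ x) * w m' l (pert φ δφ t) (pert ψ δψ t) x *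
            w (N - m') (k - l) (pert φ δφ t) (pert ψ δψ t) x :=
    fun t x => hw_rec N k hN hk (pert φ δφ t) (pert ψ δψ t) x
  -- recursion identity with a φ-slot update
  have hupdφ : ∀ j, 1 ≤ j → j ≤ k → ∀ x, w (N+1) k (updf φ δφ j) (cst ψ) x =
      -Complex.I * deriv (w N k (updf φ δφ j) (cst ψ)) x +
        κ * ∑ m' ∈ Finset.Ico 1 N, ∑ l ∈ Finset.Ico 1 k,
          ψ x * (if j ≤ l
            then w m' l (updf φ δφ j) (cst ψ) x *
                w (N - m') (k - l) (cst φ) (cst ψ) x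
            else w m' l (cst φ) (cst ψ) x *
                w (N - m') (k - l) (updf φ δφ (j - l)) (cst ψ) x) := by
    intro j hj1 hj2 x
    rw [hw_rec N k hN hk _ _ x]
    congr 2
    refine Finset.sum_congr rfl fun m' hm' => Finset.sum_congr rfl fun l hl => ?_
    obtain ⟨hm'1, hm'2⟩ := Finset.mem_Ico.1 hm'
    obtain ⟨hl1, hl2⟩ := Finset.mem_Ico.1 hl
    by_cases hjl : j ≤ l
    · rw [if_pos hjl]
      have e2 : w (N-m') (k-l) (fun i => updf φ δφ j (l+i)) (fun i => cst ψ (l+i)) =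
          w (N-m') (k-l) (cst φ) (cst ψ) :=
        loc hw_base₁ hw_base₂ hw_rec (N-m') (by omega) (k-l) (by omega) _ _ _ _
          (fun i h1 h2 => updf_apply_ne (by omega) φ δφ)
          (fun i h1 h2 => rfl)
      rw [e2]
      exact mul_assoc _ _ _
    · rw [if_neg hjl]
      have e1 : w m' l (updf φ δφ j) (cst ψ) = w m' l (cst φ) (cst ψ) :=
        loc hw_base₁ hw_base₂ hw_rec m' (by omega) l (by omega) _ _ _ _
          (fun i h1 h2 => updf_apply_ne (by omega) φ δφ)
          (fun i h1 h2 => rfl)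
      rw [e1, shift_updf_of_lt (by omega : l < j) φ δφ]
      exact mul_assoc _ _ _
  -- recursion identity with a ψ-slot update
  have hupdψ : ∀ j, 2 ≤ j → j ≤ k → ∀ x, w (N+1) k (cst φ) (updf ψ δψ j) x =
      -Complex.I * deriv (w N k (cst φ) (updf ψ δψ j)) x +
        κ * ∑ m' ∈ Finset.Ico 1 N, ∑ l ∈ Finset.Ico 1 k,
          (if j ≤ l
            then ψ x * (w m' l (cst φ) (updf ψ δψ j) x *
                w (N - m') (k - l) (cst φ) (cst ψ) x)
            else if j = l + 1 then δψ x * (w m' l (cst φ) (cst ψ) x *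
                w (N - m') (k - l) (cst φ) (cst ψ) x)
            else ψ x * (w m' l (cst φ) (cst ψ) x *
                w (N - m') (k - l) (cst φ) (updf ψ δψ (j - l)) x)) := by
    intro j hj1 hj2 x
    rw [hw_rec N k hN hk _ _ x]
    congr 2
    refine Finset.sum_congr rfl fun m' hm' => Finset.sum_congr rfl fun l hl => ?_
    obtain ⟨hm'1, hm'2⟩ := Finset.mem_Ico.1 hm'
    obtain ⟨hl1, hl2⟩ := Finset.mem_Ico.1 hl
    by_cases hjl : j ≤ l
    · rw [if_pos hjl]
      have e0 : updf ψ δψ j (l+1) = ⇑ψ := updf_apply_ne (by omega) ψ δψ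
      have e2 : w (N-m') (k-l) (fun i => cst φ (l+i)) (fun i => updf ψ δψ j (l+i)) =
          w (N-m') (k-l) (cst φ) (cst ψ) :=
        loc hw_base₁ hw_base₂ hw_rec (N-m') (by omega) (k-l) (by omega) _ _ _ _
          (fun i h1 h2 => rfl)
          (fun i h1 h2 => updf_apply_ne (by omega) ψ δψ)
      rw [e0, e2]
      exact mul_assoc _ _ _
    · by_cases hjl1 : j = l + 1
      · rw [if_neg hjl, if_pos hjl1]
        have e0 : updf ψ δψ j (l+1) = ⇑δψ := by rw [hjl1]; exact updf_apply_self _ ψ δψ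
        have e1 : w m' l (cst φ) (updf ψ δψ j) = w m' l (cst φ) (cst ψ) :=
          loc hw_base₁ hw_base₂ hw_rec m' (by omega) l (by omega) _ _ _ _
            (fun i h1 h2 => rfl)
            (fun i h1 h2 => updf_apply_ne (by omega) ψ δψ)
        have e2 : w (N-m') (k-l) (fun i => cst φ (l+i)) (fun i => updf ψ δψ j (l+i)) =
            w (N-m') (k-l) (cst φ) (cst ψ) := by
          rw [show (fun i => updf ψ δψ j (l+i)) = updf ψ δψ (j - l) from
            shift_updf_of_lt (by omega) ψ δψ]
          exact loc hw_base₁ hw_base₂ hw_rec (N-m') (by omega) (k-l) (by omega) _ _ _ _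
            (fun i h1 h2 => rfl)
            (fun i h1 h2 => updf_apply_ne (by omega) ψ δψ)
        rw [e0, e1, e2]
        exact mul_assoc _ _ _
      · rw [if_neg hjl, if_neg hjl1]
        have e0 : updf ψ δψ j (l+1) = ⇑ψ := updf_apply_ne (by omega) ψ δψ
        have e1 : w m' l (cst φ) (updf ψ δψ j) = w m' l (cst φ) (cst ψ) :=
          loc hw_base₁ hw_base₂ hw_rec m' (by omega) l (by omega) _ _ _ _
            (fun i h1 h2 => rfl)
            (fun i h1 h2 => updf_apply_ne (by omega) ψ δψ)
        rw [e0, e1, shift_updf_of_lt (by omega : l < j) ψ δψ]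
        exact mul_assoc _ _ _
  refine ⟨?_, ?_, ?_, ?_, ?_⟩
  · -- IsSch constant
    refine IsSch.congr ?_ hcst
    refine IsSch.add (IsSch.const_mul _ (IsSch.deriv (IH1 N k hN le_rfl hk))) ?_
    refine IsSch.const_mul κ ?_
    refine IsSch.sum _ _ fun m' hm' => IsSch.sum _ _ fun l hl => ?_
    obtain ⟨hm'1, hm'2⟩ := Finset.mem_Ico.1 hm'
    obtain ⟨hl1, hl2⟩ := Finset.mem_Ico.1 hl
    exact ((IsSch.coe ψ).mul (IH1 m' l (by omega) (by omega) (by omega))).mul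
      (IH1 (N-m') (k-l) (by omega) (by omega) (by omega))
  · -- IsSch updφ
    intro j hj1 hj2
    refine IsSch.congr ?_ (hupdφ j hj1 hj2)
    refine IsSch.add (IsSch.const_mul _ (IsSch.deriv ?_)) ?_
    · by_cases hjk : j ≤ k
      · exact ((IH N hN le_rfl) k hk).2.1 j hj1 hjk
      · omega
    refine IsSch.const_mul κ ?_
    refine IsSch.sum _ _ fun m' hm' => IsSch.sum _ _ fun l hl => ?_
    obtain ⟨hm'1, hm'2⟩ := Finset.mem_Ico.1 hm'
    obtain ⟨hl1, hl2⟩ := Finset.mem_Ico.1 hl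
    refine (IsSch.coe ψ).mul ?_
    by_cases hjl : j ≤ l
    · refine IsSch.congr ((IH2 m' l j (by omega) (by omega) hj1 hjl).mul
        (IH1 (N-m') (k-l) (by omega) (by omega) (by omega))) fun x => by rw [if_pos hjl]
    · refine IsSch.congr ((IH1 m' l (by omega) (by omega) (by omega)).mul
        (IH2 (N-m') (k-l) (j-l) (by omega) (by omega) (by omega) (by omega)))
        fun x => by rw [if_neg hjl]
  · -- IsSch updψ
    intro j hj1 hj2
    refine IsSch.congr ?_ (hupdψ j hj1 hj2)
    refine IsSch.add (IsSch.const_mul _ (IsSch.deriv (((IH N hN le_rfl) k hk).2.2.1 j hj1 hj2))) ?_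
    refine IsSch.const_mul κ ?_
    refine IsSch.sum _ _ fun m' hm' => IsSch.sum _ _ fun l hl => ?_
    obtain ⟨hm'1, hm'2⟩ := Finset.mem_Ico.1 hm'
    obtain ⟨hl1, hl2⟩ := Finset.mem_Ico.1 hl
    by_cases hjl : j ≤ l
    · refine IsSch.congr ((IsSch.coe ψ).mul ((IH3 m' l j (by omega) (by omega) hj1 hjl).mul
        (IH1 (N-m') (k-l) (by omega) (by omega) (by omega))))
        fun x => by rw [if_pos hjl]
    · by_cases hjl1 : j = l + 1
      · refine IsSch.congr ((IsSch.coe δψ).mul ((IH1 m' l (by omega) (by omega) (by omega)).mul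
          (IH1 (N-m') (k-l) (by omega) (by omega) (by omega))))
          fun x => by rw [if_neg hjl, if_pos hjl1]
      · refine IsSch.congr ((IsSch.coe ψ).mul ((IH1 m' l (by omega) (by omega) (by omega)).mul
          (IH3 (N-m') (k-l) (j-l) (by omega) (by omega) (by omega) (by omega))))
          fun x => by rw [if_neg hjl, if_neg hjl1]
  · -- PolyFam
    refine PolyFam.congr ?_ (fun t x => hpert t x)
    refine PolyFam.add (PolyFam.const_mul (-Complex.I)
      (PolyFam.deriv_x (IH4 N k hN le_rfl hk))) ?_
    refine PolyFam.const_mul κ ?_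
    refine PolyFam.sum _ _ fun m' hm' => PolyFam.sum _ _ fun l hl => ?_
    obtain ⟨hm'1, hm'2⟩ := Finset.mem_Ico.1 hm'
    obtain ⟨hl1, hl2⟩ := Finset.mem_Ico.1 hl
    exact ((polyFam_lin (IsSch.coe ψ) (IsSch.coe δψ)).mul
      (IH4 m' l (by omega) (by omega) (by omega))).mul
      (IH4 (N-m') (k-l) (by omega) (by omega) (by omega))
  · -- HasDerivAt
    intro x
    obtain ⟨D, c, hD2, hrepD⟩ := (IH4 N k hN le_rfl hk).rep_ge 2
    have hc1 : c 1 = slotSum w φ ψ δφ δψ N k :=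
      (funext (hrepD.deriv_eq (IH5 N k hN le_rfl hk) hD2)).symm
    have repder : Rep (fun t x => deriv (w N k (pert φ δφ t) (pert ψ δψ t)) x) D
        (fun d => deriv (c d)) :=
      ⟨fun d => (hrepD.1 d).deriv, fun t x => hrepD.deriv_x t x⟩
    have hDer1 : HasDerivAt (fun t : ℝ => deriv (w N k (pert φ δφ t) (pert ψ δψ t)) x)
        (deriv (c 1) x) 0 := repder.hasDerivAt hD2 x
    -- Schwartz-ness of the slot functions at level N
    have hSφ : ∀ j ∈ Finset.Icc 1 k, IsSch (w N k (updf φ δφ j) (cst ψ)) := by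
      intro j hj
      obtain ⟨h1, h2⟩ := Finset.mem_Icc.1 hj
      exact ((IH N hN le_rfl) k hk).2.1 j h1 h2
    have hSψ : ∀ j ∈ Finset.Icc 2 k, IsSch (w N k (cst φ) (updf ψ δψ j)) := by
      intro j hj
      obtain ⟨h1, h2⟩ := Finset.mem_Icc.1 hj
      exact ((IH N hN le_rfl) k hk).2.2.1 j h1 h2
    have hderiv_c1 : deriv (c 1) x =
        (∑ j ∈ Finset.Icc 1 k, deriv (w N k (updf φ δφ j) (cst ψ)) x) +
          ∑ j ∈ Finset.Icc 2 k, deriv (w N k (cst φ) (updf ψ δψ j)) x := by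
      rw [hc1]
      unfold slotSum
      rw [deriv_fun_add
        ((IsSch.sum _ _ hSφ).differentiable x) ((IsSch.sum _ _ hSψ).differentiable x)]
      rw [deriv_fun_sum (fun j hj => ((hSφ j hj).differentiable x)),
        deriv_fun_sum (fun j hj => ((hSψ j hj).differentiable x))]
    -- derivative of the product terms
    have hofr : HasDerivAt (fun t : ℝ => (t:ℂ)) ((1:ℂ)) (0:ℝ) := by
      simpa using (hasDerivAt_id (0:ℝ)).ofReal_comp
    have hpre : HasDerivAt (fun t : ℝ => ψ x + (t:ℂ) * δψ x) (δψ x) 0 := by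
      simpa using (hofr.mul_const (δψ x)).const_add (ψ x)
    have hterm : ∀ m' ∈ Finset.Ico 1 N, ∀ l ∈ Finset.Ico 1 k,
        HasDerivAt (fun t : ℝ => (ψ x + (t:ℂ) * δψ x) *
            w m' l (pert φ δφ t) (pert ψ δψ t) x *
            w (N - m') (k - l) (pert φ δφ t) (pert ψ δψ t) x)
          (δψ x * (w m' l (cst φ) (cst ψ) x * w (N-m') (k-l) (cst φ) (cst ψ) x)
            + ψ x * (slotSum w φ ψ δφ δψ m' l x * w (N-m') (k-l) (cst φ) (cst ψ) x)
            + ψ x * (w m' l (cst φ) (cst ψ) x * slotSum w φ ψ δφ δψ (N-m') (k-l) x)) 0 := by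
      intro m' hm' l hl
      obtain ⟨hm'1, hm'2⟩ := Finset.mem_Ico.1 hm'
      obtain ⟨hl1, hl2⟩ := Finset.mem_Ico.1 hl
      have hA := IH5 m' l (by omega) (by omega) (by omega) x
      have hB := IH5 (N-m') (k-l) (by omega) (by omega) (by omega) x
      have h := (hpre.fun_mul hA).fun_mul hB
      simp only [pert_zero] at h
      refine h.congr_deriv (Eq.symm ?_)
      simp only [Complex.ofReal_zero, zero_mul, add_zero]
      ring
    have hsum : HasDerivAt
        (fun t : ℝ => ∑ m' ∈ Finset.Ico 1 N, ∑ l ∈ Finset.Ico 1 k,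
          (ψ x + (t:ℂ) * δψ x) * w m' l (pert φ δφ t) (pert ψ δψ t) x *
            w (N - m') (k - l) (pert φ δφ t) (pert ψ δψ t) x)
        (∑ m' ∈ Finset.Ico 1 N, ∑ l ∈ Finset.Ico 1 k,
          (δψ x * (w m' l (cst φ) (cst ψ) x * w (N-m') (k-l) (cst φ) (cst ψ) x)
            + ψ x * (slotSum w φ ψ δφ δψ m' l x * w (N-m') (k-l) (cst φ) (cst ψ) x)
            + ψ x * (w m' l (cst φ) (cst ψ) x * slotSum w φ ψ δφ δψ (N-m') (k-l) x))) 0 :=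
      HasDerivAt.fun_sum fun m' hm' => HasDerivAt.fun_sum fun l hl => hterm m' hm' l hl
    have htot := (hDer1.const_mul (-Complex.I)).fun_add (hsum.const_mul κ)
    have hfun : (fun t : ℝ => w (N+1) k (pert φ δφ t) (pert ψ δψ t) x) =
        fun t : ℝ => -Complex.I * deriv (w N k (pert φ δφ t) (pert ψ δψ t)) x +
          κ * ∑ m' ∈ Finset.Ico 1 N, ∑ l ∈ Finset.Ico 1 k,
            (ψ x + (t:ℂ) * δψ x) * w m' l (pert φ δφ t) (pert ψ δψ t) x *
              w (N - m') (k - l) (pert φ δφ t) (pert ψ δψ t) x :=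
      funext fun t => hpert t x
    rw [hfun]
    refine htot.congr_deriv (Eq.symm ?_)
    -- value identity
    rw [hderiv_c1]
    show (∑ j ∈ Finset.Icc 1 k, w (N + 1) k (updf φ δφ j) (cst ψ) x) +
        (∑ j ∈ Finset.Icc 2 k, w (N + 1) k (cst φ) (updf ψ δψ j) x) = _
    rw [Finset.sum_congr rfl
        (fun j hj => hupdφ j (Finset.mem_Icc.1 hj).1 (Finset.mem_Icc.1 hj).2 x),
      Finset.sum_congr rfl
        (fun j hj => hupdψ j (Finset.mem_Icc.1 hj).1 (Finset.mem_Icc.1 hj).2 x)]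
    rw [Finset.sum_add_distrib, Finset.sum_add_distrib]
    rw [← Finset.mul_sum, ← Finset.mul_sum, ← Finset.mul_sum, ← Finset.mul_sum]
    have hPφ : (∑ j ∈ Finset.Icc 1 k, ∑ m' ∈ Finset.Ico 1 N, ∑ l ∈ Finset.Ico 1 k,
        ψ x * (if j ≤ l
          then w m' l (updf φ δφ j) (cst ψ) x * w (N - m') (k - l) (cst φ) (cst ψ) x
          else w m' l (cst φ) (cst ψ) x * w (N - m') (k - l) (updf φ δφ (j - l)) (cst ψ) x))
        = ∑ m' ∈ Finset.Ico 1 N, ∑ l ∈ Finset.Ico 1 k,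
          ψ x * ((∑ j ∈ Finset.Icc 1 l, w m' l (updf φ δφ j) (cst ψ) x) *
              w (N - m') (k - l) (cst φ) (cst ψ) x +
            w m' l (cst φ) (cst ψ) x *
              ∑ j ∈ Finset.Icc 1 (k - l), w (N - m') (k - l) (updf φ δφ j) (cst ψ) x) := by
      rw [Finset.sum_comm]
      refine Finset.sum_congr rfl fun m' hm' => ?_
      rw [Finset.sum_comm]
      refine Finset.sum_congr rfl fun l hl => ?_
      obtain ⟨hl1, hl2⟩ := Finset.mem_Ico.1 hl
      rw [← Finset.mul_sum, regroupφ hl1 hl2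
        (fun j => w m' l (updf φ δφ j) (cst ψ) x)
        (fun j => w (N - m') (k - l) (updf φ δφ j) (cst ψ) x)
        (w m' l (cst φ) (cst ψ) x) (w (N - m') (k - l) (cst φ) (cst ψ) x)]
    have hPψ : (∑ j ∈ Finset.Icc 2 k, ∑ m' ∈ Finset.Ico 1 N, ∑ l ∈ Finset.Ico 1 k,
        (if j ≤ l
          then ψ x * (w m' l (cst φ) (updf ψ δψ j) x *
              w (N - m') (k - l) (cst φ) (cst ψ) x)
          else if j = l + 1 then δψ x * (w m' l (cst φ) (cst ψ) x *
              w (N - m') (k - l) (cst φ) (cst ψ) x)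
          else ψ x * (w m' l (cst φ) (cst ψ) x *
              w (N - m') (k - l) (cst φ) (updf ψ δψ (j - l)) x)))
        = ∑ m' ∈ Finset.Ico 1 N, ∑ l ∈ Finset.Ico 1 k,
          (δψ x * (w m' l (cst φ) (cst ψ) x * w (N - m') (k - l) (cst φ) (cst ψ) x)
            + ψ x * ((∑ j ∈ Finset.Icc 2 l, w m' l (cst φ) (updf ψ δψ j) x) *
                w (N - m') (k - l) (cst φ) (cst ψ) x)
            + ψ x * (w m' l (cst φ) (cst ψ) x *
                ∑ j ∈ Finset.Icc 2 (k - l), w (N - m') (k - l) (cst φ) (updf ψ δψ j) x)) := by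
      rw [Finset.sum_comm]
      refine Finset.sum_congr rfl fun m' hm' => ?_
      rw [Finset.sum_comm]
      refine Finset.sum_congr rfl fun l hl => ?_
      obtain ⟨hl1, hl2⟩ := Finset.mem_Ico.1 hl
      rw [regroupψ hl1 hl2
        (fun j => w m' l (cst φ) (updf ψ δψ j) x)
        (fun j => w (N - m') (k - l) (cst φ) (updf ψ δψ j) x)
        (w m' l (cst φ) (cst ψ) x) (w (N - m') (k - l) (cst φ) (cst ψ) x)
        (δψ x) (ψ x)]
    rw [hPφ, hPψ]
    have hmerge : (∑ m' ∈ Finset.Ico 1 N, ∑ l ∈ Finset.Ico 1 k,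
        (δψ x * (w m' l (cst φ) (cst ψ) x * w (N-m') (k-l) (cst φ) (cst ψ) x)
          + ψ x * (slotSum w φ ψ δφ δψ m' l x * w (N-m') (k-l) (cst φ) (cst ψ) x)
          + ψ x * (w m' l (cst φ) (cst ψ) x * slotSum w φ ψ δφ δψ (N-m') (k-l) x)))
        = (∑ m' ∈ Finset.Ico 1 N, ∑ l ∈ Finset.Ico 1 k,
            ψ x * ((∑ j ∈ Finset.Icc 1 l, w m' l (updf φ δφ j) (cst ψ) x) *
                w (N - m') (k - l) (cst φ) (cst ψ) x +
              w m' l (cst φ) (cst ψ) x *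
                ∑ j ∈ Finset.Icc 1 (k - l), w (N - m') (k - l) (updf φ δφ j) (cst ψ) x))
          + ∑ m' ∈ Finset.Ico 1 N, ∑ l ∈ Finset.Ico 1 k,
            (δψ x * (w m' l (cst φ) (cst ψ) x * w (N - m') (k - l) (cst φ) (cst ψ) x)
              + ψ x * ((∑ j ∈ Finset.Icc 2 l, w m' l (cst φ) (updf ψ δψ j) x) *
                  w (N - m') (k - l) (cst φ) (cst ψ) x)
              + ψ x * (w m' l (cst φ) (cst ψ) x *
                  ∑ j ∈ Finset.Icc 2 (k - l), w (N - m') (k - l) (cst φ) (updf ψ δψ j) x)) := by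
      rw [← Finset.sum_add_distrib]
      refine Finset.sum_congr rfl fun m' hm' => ?_
      rw [← Finset.sum_add_distrib]
      refine Finset.sum_congr rfl fun l hl => ?_
      simp only [slotSum]
      ring
    rw [hmerge]
    ring


lemma good_all
    (hw_base₁ : ∀ φ' ψ' : ℕ → ℝ → ℂ, w 1 1 φ' ψ' = φ' 1)
    (hw_base₂ : ∀ k, 2 ≤ k → ∀ φ' ψ' : ℕ → ℝ → ℂ, w 1 k φ' ψ' = 0)
    (hw_rec : ∀ n k, 1 ≤ n → 1 ≤ k → ∀ (φ' ψ' : ℕ → ℝ → ℂ) (x : ℝ),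
      w (n + 1) k φ' ψ' x =
        -Complex.I * deriv (w n k φ' ψ') x +
          κ * ∑ m ∈ Finset.Ico 1 n, ∑ l ∈ Finset.Ico 1 k,
            ψ' (l + 1) x * w m l φ' ψ' x *
              w (n - m) (k - l) (fun i => φ' (l + i)) (fun i => ψ' (l + i)) x) :
    ∀ m, 1 ≤ m → Good w φ ψ δφ δψ m := by
  intro m
  induction m using Nat.strong_induction_on with
  | _ m IHm =>
    intro hm
    match m, hm with
    | 0, h => exact absurd h (by omega)
    | 1, _ => exact good_one hw_base₁ hw_base₂
    | (N+2), _ =>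
      exact good_step hw_base₁ hw_base₂ hw_rec (by omega : 1 ≤ N + 1)
        (fun m' h1 h2 => IHm m' (by omega) h1)

end W

end NLS5

open NLS5 in
/-- Variational derivative formula for the hierarchy functionals: with
`Ĩ_n(f,g) = ∑_{k=1}^n ∫ g · w_n^{(k)}[f,…,f; g,…,g]`, the map
`t ↦ Ĩ_n(φ + tδφ, ψ + tδψ)` is differentiable at `t = 0` with derivative
`∫ δφ · (∑_k ∑_j w_{n,j}^{(k),t}[…]) + ∫ δψ · (∑_k ∑_j w_{n,j'}^{(k),t}[…])`,
where the `j = 1` ψ-slot transpose is `w n k` itself. -/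
theorem nls_hierarchy_variational_derivative
    (κ : ℂ) (hκ : κ = 1 ∨ κ = -1)
    (w : ℕ → ℕ → (ℕ → ℝ → ℂ) → (ℕ → ℝ → ℂ) → ℝ → ℂ)
    (hw_base₁ : ∀ φ ψ : ℕ → ℝ → ℂ, w 1 1 φ ψ = φ 1)
    (hw_base₂ : ∀ k, 2 ≤ k → ∀ φ ψ : ℕ → ℝ → ℂ, w 1 k φ ψ = 0)
    (hw_rec : ∀ n k, 1 ≤ n → 1 ≤ k → ∀ (φ ψ : ℕ → ℝ → ℂ) (x : ℝ),
      w (n + 1) k φ ψ x =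
        -Complex.I * deriv (w n k φ ψ) x +
          κ * ∑ m ∈ Finset.Ico 1 n, ∑ l ∈ Finset.Ico 1 k,
            ψ (l + 1) x * w m l φ ψ x *
              w (n - m) (k - l) (fun i => φ (l + i)) (fun i => ψ (l + i)) x)
    (wtφ wtψ : ℕ → ℕ → ℕ → (ℕ → SchwartzMap ℝ ℂ) → (ℕ → SchwartzMap ℝ ℂ) → SchwartzMap ℝ ℂ)
    (hwtφ : ∀ n k j, 1 ≤ n → 1 ≤ j → j ≤ k →
      ∀ (φ ψ : ℕ → SchwartzMap ℝ ℂ) (δφ : SchwartzMap ℝ ℂ),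
        ∫ x : ℝ, δφ x * wtφ n k j φ ψ x =
          ∫ x : ℝ, φ j x *
            w n k (Function.update (fun i => ⇑(φ i)) j ⇑δφ) (fun i => ⇑(ψ i)) x)
    (hwtψ : ∀ n k j, 1 ≤ n → 2 ≤ j → j ≤ k →
      ∀ (φ ψ : ℕ → SchwartzMap ℝ ℂ) (δψ : SchwartzMap ℝ ℂ),
        ∫ x : ℝ, δψ x * wtψ n k j φ ψ x =
          ∫ x : ℝ, ψ j x *
            w n k (fun i => ⇑(φ i)) (Function.update (fun i => ⇑(ψ i)) j ⇑δψ) x)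
    (n : ℕ) (hn : 1 ≤ n) (φ ψ δφ δψ : SchwartzMap ℝ ℂ) :
    HasDerivAt
      (fun t : ℝ => ∑ k ∈ Finset.Icc 1 n,
        ∫ x : ℝ, (ψ x + t * δψ x) *
          w n k (fun _ => fun y => φ y + t * δφ y) (fun _ => fun y => ψ y + t * δψ y) x)
      ((∫ x : ℝ, δφ x *
          ∑ k ∈ Finset.Icc 1 n, ∑ j ∈ Finset.Icc 1 k,
            wtφ n k j (Function.update (fun _ : ℕ => φ) j ψ) (fun _ => ψ) x) +
        ∫ x : ℝ, δψ x *
          ∑ k ∈ Finset.Icc 1 n,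
            (w n k (fun _ => ⇑φ) (fun _ => ⇑ψ) x +
              ∑ j ∈ Finset.Icc 2 k, wtψ n k j (fun _ => φ) (fun _ => ψ) x))
      0 := by
  classical
  have hgood : ∀ m, 1 ≤ m → Good w φ ψ δφ δψ m :=
    good_all hw_base₁ hw_base₂ hw_rec
  -- per-k derivative
  have main : ∀ k, 1 ≤ k → k ≤ n →
      HasDerivAt (fun t : ℝ => ∫ x : ℝ, (ψ x + (t:ℂ) * δψ x) *
          w n k (pert φ δφ t) (pert ψ δψ t) x)
        ((∑ j ∈ Finset.Icc 1 k, ∫ x : ℝ, δφ x *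
            wtφ n k j (Function.update (fun _ : ℕ => φ) j ψ) (fun _ => ψ) x) +
          ((∫ x : ℝ, δψ x * w n k (cst φ) (cst ψ) x) +
            ∑ j ∈ Finset.Icc 2 k, ∫ x : ℝ, δψ x * wtψ n k j (fun _ => φ) (fun _ => ψ) x)) 0 := by
    intro k hk1 hk2
    obtain ⟨hW, hslotφ, hslotψ, polyF, hasD⟩ := hgood n hn k hk1
    obtain ⟨D, c, hD2, hrep⟩ := polyF.rep_ge 2
    have hrep2 : ∀ (t x : ℝ), w n k (pert φ δφ t) (pert ψ δψ t) x
        = ∑ d ∈ Finset.range D, (t:ℂ)^d * c d x := hrep.2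
    have hint1 : ∀ d, Integrable (fun x : ℝ => ψ x * c d x) :=
      fun d => ((IsSch.coe ψ).mul (hrep.1 d)).integrable
    have hint2 : ∀ d, Integrable (fun x : ℝ => δψ x * c d x) :=
      fun d => ((IsSch.coe δψ).mul (hrep.1 d)).integrable
    have hGk : (fun t : ℝ => ∫ x : ℝ, (ψ x + (t:ℂ) * δψ x) *
          w n k (pert φ δφ t) (pert ψ δψ t) x)
        = fun t : ℝ => ∑ d ∈ Finset.range D,
            ((t:ℂ)^d * (∫ x : ℝ, ψ x * c d x) +
              (t:ℂ)^(d+1) * ∫ x : ℝ, δψ x * c d x) := by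
      funext t
      have hintg : ∀ x : ℝ, (ψ x + (t:ℂ) * δψ x) *
          w n k (pert φ δφ t) (pert ψ δψ t) x
          = ∑ d ∈ Finset.range D,
              ((t:ℂ)^d * (ψ x * c d x) + (t:ℂ)^(d+1) * (δψ x * c d x)) := by
        intro x
        rw [hrep2 t x, Finset.mul_sum]
        refine Finset.sum_congr rfl fun d _ => ?_
        ring
      calc (∫ x : ℝ, (ψ x + (t:ℂ) * δψ x) * w n k (pert φ δφ t) (pert ψ δψ t) x)
          = ∫ x : ℝ, ∑ d ∈ Finset.range D,
              ((t:ℂ)^d * (ψ x * c d x) + (t:ℂ)^(d+1) * (δψ x * c d x)) := by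
            congr 1; funext x; exact hintg x
        _ = ∑ d ∈ Finset.range D, ∫ x : ℝ,
              ((t:ℂ)^d * (ψ x * c d x) + (t:ℂ)^(d+1) * (δψ x * c d x)) :=
            integral_finset_sum _ (fun d _ =>
              (((hint1 d).const_mul _)).add ((hint2 d).const_mul _))
        _ = ∑ d ∈ Finset.range D,
            ((t:ℂ)^d * (∫ x : ℝ, ψ x * c d x) +
              (t:ℂ)^(d+1) * ∫ x : ℝ, δψ x * c d x) := by
            refine Finset.sum_congr rfl fun d _ => ?_
            rw [integral_add ((hint1 d).const_mul _) ((hint2 d).const_mul _),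
              integral_const_mul, integral_const_mul]
    have hDer : HasDerivAt
        (fun t : ℝ => ∑ d ∈ Finset.range D,
          ((t:ℂ)^d * (∫ x : ℝ, ψ x * c d x) +
            (t:ℂ)^(d+1) * ∫ x : ℝ, δψ x * c d x))
        (∑ d ∈ Finset.range D,
          ((((d:ℕ):ℂ) * (((0:ℝ)):ℂ)^(d-1)) * (∫ x : ℝ, ψ x * c d x) +
            ((((d+1:ℕ)):ℂ) * (((0:ℝ)):ℂ)^(d+1-1)) * ∫ x : ℝ, δψ x * c d x)) 0 :=
      HasDerivAt.fun_sum fun d _ =>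
        (hasDerivAt_monomial d _ 0).add (hasDerivAt_monomial (d+1) _ 0)
    have hV : (∑ d ∈ Finset.range D,
          ((((d:ℕ):ℂ) * (((0:ℝ)):ℂ)^(d-1)) * (∫ x : ℝ, ψ x * c d x) +
            ((((d+1:ℕ)):ℂ) * (((0:ℝ)):ℂ)^(d+1-1)) * ∫ x : ℝ, δψ x * c d x))
        = (∫ x : ℝ, ψ x * c 1 x) + ∫ x : ℝ, δψ x * c 0 x := by
      rw [Finset.sum_add_distrib]
      congr 1
      · rw [Finset.sum_eq_single 1]
        · simp
        · intro d _ hd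
          match d, hd with
          | 0, _ => simp
          | (e+2), _ => simp [zero_pow]
        · intro h1; exact absurd (Finset.mem_range.2 (by omega)) h1
      · rw [Finset.sum_eq_single 0]
        · simp
        · intro d _ hd
          match d, hd with
          | (e+1), _ => simp [zero_pow]
        · intro h0; exact absurd (Finset.mem_range.2 (by omega)) h0
    -- identify c 0 and c 1
    have hc0 : ∀ x, c 0 x = w n k (cst φ) (cst ψ) x := by
      intro x
      have h0 : w n k (pert φ δφ 0) (pert ψ δψ 0) x = c 0 x :=
        Rep.apply_zero hrep (by omega) x
      rw [pert_zero, pert_zero] at h0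
      exact h0.symm
    have hc1 : ∀ x, c 1 x = slotSum w φ ψ δφ δψ n k x :=
      fun x => (Rep.deriv_eq hrep hasD hD2 x).symm
    have hC2 : (∫ x : ℝ, δψ x * c 0 x) = ∫ x : ℝ, δψ x * w n k (cst φ) (cst ψ) x := by
      congr 1; funext x; rw [hc0 x]
    have hintφ : ∀ j ∈ Finset.Icc 1 k,
        Integrable (fun x : ℝ => ψ x * w n k (updf φ δφ j) (cst ψ) x) := fun j hj =>
      ((IsSch.coe ψ).mul
        (hslotφ j (Finset.mem_Icc.1 hj).1 (Finset.mem_Icc.1 hj).2)).integrable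
    have hintψ : ∀ j ∈ Finset.Icc 2 k,
        Integrable (fun x : ℝ => ψ x * w n k (cst φ) (updf ψ δψ j) x) := fun j hj =>
      ((IsSch.coe ψ).mul
        (hslotψ j (Finset.mem_Icc.1 hj).1 (Finset.mem_Icc.1 hj).2)).integrable
    have hC1 : (∫ x : ℝ, ψ x * c 1 x)
        = (∑ j ∈ Finset.Icc 1 k, ∫ x : ℝ, ψ x * w n k (updf φ δφ j) (cst ψ) x)
          + ∑ j ∈ Finset.Icc 2 k, ∫ x : ℝ, ψ x * w n k (cst φ) (updf ψ δψ j) x := by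
      calc (∫ x : ℝ, ψ x * c 1 x)
          = ∫ x : ℝ, ((∑ j ∈ Finset.Icc 1 k, ψ x * w n k (updf φ δφ j) (cst ψ) x)
              + ∑ j ∈ Finset.Icc 2 k, ψ x * w n k (cst φ) (updf ψ δψ j) x) := by
            congr 1; funext x
            rw [hc1 x]
            simp only [slotSum]
            rw [mul_add, Finset.mul_sum, Finset.mul_sum]
        _ = _ := by
            rw [integral_add
              (IsSch.sum _ _ (fun j hj => (IsSch.coe ψ).mul
                (hslotφ j (Finset.mem_Icc.1 hj).1 (Finset.mem_Icc.1 hj).2))).integrable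
              (IsSch.sum _ _ (fun j hj => (IsSch.coe ψ).mul
                (hslotψ j (Finset.mem_Icc.1 hj).1 (Finset.mem_Icc.1 hj).2))).integrable,
              integral_finset_sum _ hintφ, integral_finset_sum _ hintψ]
    have hIφeq : ∀ j ∈ Finset.Icc 1 k,
        (∫ x : ℝ, ψ x * w n k (updf φ δφ j) (cst ψ) x)
          = ∫ x : ℝ, δφ x * wtφ n k j (Function.update (fun _ : ℕ => φ) j ψ)
              (fun _ => ψ) x := by
      intro j hj
      obtain ⟨hj1, hj2⟩ := Finset.mem_Icc.1 hj
      have h := hwtφ n k j hn hj1 hj2 (Function.update (fun _ : ℕ => φ) j ψ)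
        (fun _ => ψ) δφ
      have harg : Function.update
          (fun i => ⇑((Function.update (fun _ : ℕ => φ) j ψ) i)) j ⇑δφ
          = updf φ δφ j := by
        funext i
        rcases eq_or_ne i j with hij | hij
        · subst hij
          rw [Function.update_self, updf, Function.update_self]
        · rw [Function.update_of_ne hij, Function.update_of_ne hij,
            updf, Function.update_of_ne hij]
          rfl
      have h2 : (∫ x : ℝ, ((Function.update (fun _ : ℕ => φ) j ψ) j) x *
            w n k (Function.update
              (fun i => ⇑((Function.update (fun _ : ℕ => φ) j ψ) i)) j ⇑δφ)
              (fun i => ⇑((fun _ : ℕ => ψ) i)) x)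
          = ∫ x : ℝ, ψ x * w n k (updf φ δφ j) (cst ψ) x := by
        rw [Function.update_self, harg]
        rfl
      exact (h.trans h2).symm
    have hIψeq : ∀ j ∈ Finset.Icc 2 k,
        (∫ x : ℝ, ψ x * w n k (cst φ) (updf ψ δψ j) x)
          = ∫ x : ℝ, δψ x * wtψ n k j (fun _ => φ) (fun _ => ψ) x := by
      intro j hj
      obtain ⟨hj1, hj2⟩ := Finset.mem_Icc.1 hj
      exact (hwtψ n k j hn hj1 hj2 (fun _ => φ) (fun _ => ψ) δψ).symm
    rw [hGk]
    convert hDer using 1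
    rw [hV, hC1, hC2]
    rw [Finset.sum_congr rfl hIφeq, Finset.sum_congr rfl hIψeq]
    ring
  -- assemble all k
  have htotal := HasDerivAt.fun_sum (u := Finset.Icc 1 n)
    (fun k hk => main k (Finset.mem_Icc.1 hk).1 (Finset.mem_Icc.1 hk).2)
  have e1 : (∫ x : ℝ, δφ x *
        ∑ k ∈ Finset.Icc 1 n, ∑ j ∈ Finset.Icc 1 k,
          wtφ n k j (Function.update (fun _ : ℕ => φ) j ψ) (fun _ => ψ) x)
      = ∑ k ∈ Finset.Icc 1 n, ∑ j ∈ Finset.Icc 1 k, ∫ x : ℝ, δφ x *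
          wtφ n k j (Function.update (fun _ : ℕ => φ) j ψ) (fun _ => ψ) x := by
    calc (∫ x : ℝ, δφ x * ∑ k ∈ Finset.Icc 1 n, ∑ j ∈ Finset.Icc 1 k,
          wtφ n k j (Function.update (fun _ : ℕ => φ) j ψ) (fun _ => ψ) x)
        = ∫ x : ℝ, ∑ k ∈ Finset.Icc 1 n, ∑ j ∈ Finset.Icc 1 k, δφ x *
            wtφ n k j (Function.update (fun _ : ℕ => φ) j ψ) (fun _ => ψ) x := by
          congr 1; funext x
          rw [Finset.mul_sum]
          exact Finset.sum_congr rfl fun k _ => by rw [Finset.mul_sum]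
      _ = ∑ k ∈ Finset.Icc 1 n, ∫ x : ℝ, ∑ j ∈ Finset.Icc 1 k, δφ x *
            wtφ n k j (Function.update (fun _ : ℕ => φ) j ψ) (fun _ => ψ) x :=
          integral_finset_sum _ (fun k _ =>
            (IsSch.sum _ _ (fun j _ => (IsSch.coe δφ).mul (IsSch.coe _))).integrable)
      _ = _ := Finset.sum_congr rfl fun k _ =>
          integral_finset_sum _ (fun j _ =>
            ((IsSch.coe δφ).mul (IsSch.coe _)).integrable)
  have e2 : (∫ x : ℝ, δψ x *
        ∑ k ∈ Finset.Icc 1 n,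
          (w n k (fun _ => ⇑φ) (fun _ => ⇑ψ) x +
            ∑ j ∈ Finset.Icc 2 k, wtψ n k j (fun _ => φ) (fun _ => ψ) x))
      = ∑ k ∈ Finset.Icc 1 n,
          ((∫ x : ℝ, δψ x * w n k (cst φ) (cst ψ) x) +
            ∑ j ∈ Finset.Icc 2 k, ∫ x : ℝ, δψ x * wtψ n k j (fun _ => φ) (fun _ => ψ) x) := by
    have hWsch : ∀ k ∈ Finset.Icc 1 n, IsSch (w n k (cst φ) (cst ψ)) := fun k hk =>
      (hgood n hn k (Finset.mem_Icc.1 hk).1).1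
    calc (∫ x : ℝ, δψ x * ∑ k ∈ Finset.Icc 1 n,
          (w n k (fun _ => ⇑φ) (fun _ => ⇑ψ) x +
            ∑ j ∈ Finset.Icc 2 k, wtψ n k j (fun _ => φ) (fun _ => ψ) x))
        = ∫ x : ℝ, ∑ k ∈ Finset.Icc 1 n,
            (δψ x * w n k (cst φ) (cst ψ) x +
              ∑ j ∈ Finset.Icc 2 k, δψ x * wtψ n k j (fun _ => φ) (fun _ => ψ) x) := by
          congr 1; funext x
          rw [Finset.mul_sum]
          refine Finset.sum_congr rfl fun k _ => ?_
          rw [mul_add, Finset.mul_sum]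
          rfl
      _ = ∑ k ∈ Finset.Icc 1 n, ∫ x : ℝ,
            (δψ x * w n k (cst φ) (cst ψ) x +
              ∑ j ∈ Finset.Icc 2 k, δψ x * wtψ n k j (fun _ => φ) (fun _ => ψ) x) :=
          integral_finset_sum _ (fun k hk =>
            (((IsSch.coe δψ).mul (hWsch k hk)).add
              (IsSch.sum _ _ (fun j _ => (IsSch.coe δψ).mul (IsSch.coe _)))).integrable)
      _ = _ := Finset.sum_congr rfl fun k hk => by
          rw [integral_add ((IsSch.coe δψ).mul (hWsch k hk)).integrable
            (IsSch.sum _ _ (fun j _ => (IsSch.coe δψ).mul (IsSch.coe _))).integrable,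
            integral_finset_sum _ (fun j _ =>
              ((IsSch.coe δψ).mul (IsSch.coe _)).integrable)]
  rw [e1, e2, ← Finset.sum_add_distrib]
  exact htotal
end

section
/- Off-diagonal scalar form of the gauge-transform recursion matrices (Lemma A.3): Fix κ ∈ {1, −1} and c ∈ ℂ with c² = κ (c = 1 if κ = 1, c = i if κ = −1). Let ψ_1, ψ_2 : ℝ → ℂ be smooth and define U_0(x) := c·[[0, ψ_2(x)],[ψ_1(x), 0]] and σ₃ := [[1,0],[0,−1]]. Define matrices W_{n,(ψ_1,ψ_2)} : ℝ → M₂(ℂ) by W_{1,(ψ_1,ψ_2)}(x) := −i σ₃ U_0(x) and W_{n+1,(ψ_1,ψ_2)}(x) := i σ₃ ( ∂_x W_{n,(ψ_1,ψ_2)}(x) + ∑_{k=1}^{n−1} W_{k,(ψ_1,ψ_2)}(x)·U_0(x)·W_{n−k,(ψ_1,ψ_2)}(x) ). Define scalar functions by w_{1,(f,g)} := f and w_{n+1,(f,g)} := −i ∂_x w_{n,(f,g)} + κ g ∑_{m=1}^{n−1} w_{m,(f,g)} w_{n−m,(f,g)}. Then for every n ≥ 1 and x ∈ ℝ, W_{n,(ψ_1,ψ_2)}(x)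 = i c · [[0, −conj(w_{n,(conj ψ_2, conj ψ_1)}(x))],[w_{n,(ψ_1,ψ_2)}(x), 0]]. In particular each W_{n,(ψ_1,ψ_2)}(x) is off-diagonal and satisfies the involution σ W_{n,(ψ_1,ψ_2)}(x) σ = conj(W_{n,(conj ψ_2, conj ψ_1)}(x)), where σ = [[0,1],[1,0]] if κ = 1 and σ = [[0,−i],[i,0]] if κ = −1. -/
private lemma deriv_conj' (φ : ℝ → ℂ) (x : ℝ) :
    deriv (fun s => (starRingEnd ℂ) (φ s)) x = (starRingEnd ℂ) (deriv φ x) := by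
  simp only [starRingEnd_apply]
  exact deriv.star

private lemma aux_formula (κ c : ℂ) (hc2 : c * c = κ) (hκ : (starRingEnd ℂ) κ = κ)
    (f g : ℝ → ℂ) (W : ℕ → ℝ → Matrix (Fin 2) (Fin 2) ℂ)
    (ws : ℕ → (ℝ → ℂ) → (ℝ → ℂ) → ℝ → ℂ)
    (hW1 : ∀ x : ℝ,
      W 1 x = (-Complex.I) • (!![(1 : ℂ), 0; 0, -1] * (c • !![0, g x; f x, 0])))
    (hWrec : ∀ n, 1 ≤ n → ∀ x : ℝ,
      W (n + 1) x = Complex.I • (!![(1 : ℂ), 0; 0, -1] *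
        (Matrix.of (fun i j => deriv (fun s => W n s i j) x) +
          ∑ k ∈ Finset.Ico 1 n, W k x * (c • !![0, g x; f x, 0]) * W (n - k) x)))
    (hws_base : ∀ f g : ℝ → ℂ, ws 1 f g = f)
    (hws_rec : ∀ n, 1 ≤ n → ∀ (f g : ℝ → ℂ) (x : ℝ),
      ws (n + 1) f g x =
        -Complex.I * deriv (ws n f g) x +
          κ * g x * ∑ m ∈ Finset.Ico 1 n, ws m f g x * ws (n - m) f g x) :
    ∀ n, 1 ≤ n → ∀ x : ℝ, W n x = (Complex.I * c) •
        !![0, -(starRingEnd ℂ)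
              (ws n (fun t => (starRingEnd ℂ) (g t)) (fun t => (starRingEnd ℂ) (f t)) x);
           ws n f g x, 0] := by
  have hc3 : c ^ 3 = κ * c := by linear_combination c * hc2
  intro n
  induction n using Nat.strong_induction_on with
  | _ n IH =>
  match n with
  | 0 => intro h; omega
  | 1 =>
    intro _ x
    rw [hW1, hws_base, hws_base]
    ext i j
    fin_cases i <;> fin_cases j <;>
      simp [Matrix.mul_apply, Fin.sum_univ_succ] <;> ring
  | (m + 2) =>
    intro _ x
    set f' : ℝ → ℂ := fun t => (starRingEnd ℂ) (g t) with hf'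
    set g' : ℝ → ℂ := fun t => (starRingEnd ℂ) (f t) with hg'
    have hm1 : 1 ≤ m + 1 := by omega
    have hD : Matrix.of (fun i j => deriv (fun s => W (m + 1) s i j) x) =
        (Complex.I * c) • !![0, -((starRingEnd ℂ) (deriv (ws (m + 1) f' g') x));
          deriv (ws (m + 1) f g) x, 0] := by
      ext i j
      have hfun : ∀ i j, (fun s => W (m + 1) s i j) =
          fun s => ((Complex.I * c) •
            !![0, -((starRingEnd ℂ) (ws (m + 1) f' g' s)); ws (m + 1) f g s, 0]
              : Matrix (Fin 2) (Fin 2) ℂ) i j := by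
        intro i j; funext s; rw [IH (m + 1) (by omega) hm1 s]
      fin_cases i <;> fin_cases j <;>
        · simp only [Matrix.of_apply, hfun]
          simp only [Matrix.smul_apply, Matrix.cons_val', Matrix.cons_val_zero,
            Matrix.cons_val_one, Matrix.head_cons, Matrix.empty_val',
            Matrix.cons_val_fin_one, Matrix.head_fin_const, smul_eq_mul, mul_zero,
            mul_neg]
          simp [deriv_const_mul_field, deriv_conj', deriv.neg]
    have hterm : ∀ k ∈ Finset.Ico 1 (m + 1),
        W k x * (c • !![0, g x; f x, 0]) * W (m + 1 - k) x =
        !![0, (-(κ * c) * f x) *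
              ((starRingEnd ℂ) (ws k f' g' x) * (starRingEnd ℂ) (ws (m + 1 - k) f' g' x));
           (-(κ * c) * g x) * (ws k f g x * ws (m + 1 - k) f g x), 0] := by
      intro k hk
      rw [Finset.mem_Ico] at hk
      rw [IH k (by omega) (by omega) x, IH (m + 1 - k) (by omega) (by omega) x]
      ext i j
      fin_cases i <;> fin_cases j <;>
        · simp [Matrix.mul_apply, Fin.sum_univ_succ]
          try ring_nf
          try simp [Complex.I_sq, hc3]
          try ring_nf
    have hsum : ∑ k ∈ Finset.Ico 1 (m + 1),
        (!![0, (-(κ * c) * f x) *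
              ((starRingEnd ℂ) (ws k f' g' x) * (starRingEnd ℂ) (ws (m + 1 - k) f' g' x));
           (-(κ * c) * g x) * (ws k f g x * ws (m + 1 - k) f g x), 0]
          : Matrix (Fin 2) (Fin 2) ℂ) =
        !![0, (-(κ * c) * f x) * ∑ k ∈ Finset.Ico 1 (m + 1),
              (starRingEnd ℂ) (ws k f' g' x) * (starRingEnd ℂ) (ws (m + 1 - k) f' g' x);
           (-(κ * c) * g x) * ∑ k ∈ Finset.Ico 1 (m + 1),
              ws k f g x * ws (m + 1 - k) f g x, 0] := by
      ext i j
      fin_cases i <;> fin_cases j <;>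
        simp [Matrix.sum_apply, Finset.mul_sum]
    rw [hWrec (m + 1) hm1 x, hD, Finset.sum_congr rfl hterm, hsum,
      hws_rec (m + 1) hm1 f g x, hws_rec (m + 1) hm1 f' g' x]
    ext i j
    fin_cases i <;> fin_cases j <;>
      · simp [Matrix.mul_apply, Fin.sum_univ_succ, map_add, map_mul, map_neg, map_sum,
          Complex.conj_I, hκ, hg', Complex.conj_conj]
        try ring_nf

/-- Off-diagonal scalar form of the gauge-transform recursion matrices
(Lemma A.3): with `W₁ = -i σ₃ U₀`, `W_{n+1} = i σ₃ (∂ₓ W_n + ∑_{k=1}^{n-1} W_k U₀ W_{n-k})`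
and the scalar recursion `w`, one has
`W_n(x) = (i c) • [[0, -conj (w_{n,(conj ψ₂, conj ψ₁)}(x))], [w_{n,(ψ₁,ψ₂)}(x), 0]]`;
in particular `W_n(x)` is off-diagonal and `σ W_n(x) σ = conj (W'_n(x))`, where `W'` is the
analogous matrix family built from the data `(conj ψ₂, conj ψ₁)`. -/
theorem gauge_recursion_matrices_offdiagonal
    (κ c : ℂ) (σ : Matrix (Fin 2) (Fin 2) ℂ)
    (hcase : (κ = 1 ∧ c = 1 ∧ σ = !![0, 1; 1, 0]) ∨
      (κ = -1 ∧ c = Complex.I ∧ σ = !![0, -Complex.I; Complex.I, 0]))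
    (ψ₁ ψ₂ : ℝ → ℂ) (hψ₁ : ContDiff ℝ (⊤ : ℕ∞) ψ₁) (hψ₂ : ContDiff ℝ (⊤ : ℕ∞) ψ₂)
    (W W' : ℕ → ℝ → Matrix (Fin 2) (Fin 2) ℂ)
    (ws : ℕ → (ℝ → ℂ) → (ℝ → ℂ) → ℝ → ℂ)
    (hW1 : ∀ x : ℝ,
      W 1 x = (-Complex.I) • (!![(1 : ℂ), 0; 0, -1] * (c • !![0, ψ₂ x; ψ₁ x, 0])))
    (hWrec : ∀ n, 1 ≤ n → ∀ x : ℝ,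
      W (n + 1) x = Complex.I • (!![(1 : ℂ), 0; 0, -1] *
        (Matrix.of (fun i j => deriv (fun s => W n s i j) x) +
          ∑ k ∈ Finset.Ico 1 n, W k x * (c • !![0, ψ₂ x; ψ₁ x, 0]) * W (n - k) x)))
    (hW'1 : ∀ x : ℝ,
      W' 1 x = (-Complex.I) • (!![(1 : ℂ), 0; 0, -1] *
        (c • !![0, (starRingEnd ℂ) (ψ₁ x); (starRingEnd ℂ) (ψ₂ x), 0])))
    (hW'rec : ∀ n, 1 ≤ n → ∀ x : ℝ,
      W' (n + 1) x = Complex.I • (!![(1 : ℂ), 0; 0, -1] *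
        (Matrix.of (fun i j => deriv (fun s => W' n s i j) x) +
          ∑ k ∈ Finset.Ico 1 n,
            W' k x * (c • !![0, (starRingEnd ℂ) (ψ₁ x); (starRingEnd ℂ) (ψ₂ x), 0]) *
              W' (n - k) x)))
    (hws_base : ∀ f g : ℝ → ℂ, ws 1 f g = f)
    (hws_rec : ∀ n, 1 ≤ n → ∀ (f g : ℝ → ℂ) (x : ℝ),
      ws (n + 1) f g x =
        -Complex.I * deriv (ws n f g) x +
          κ * g x * ∑ m ∈ Finset.Ico 1 n, ws m f g x * ws (n - m) f g x)
    (n : ℕ) (hn : 1 ≤ n) (x : ℝ) :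
    W n x = (Complex.I * c) •
        !![0, -(starRingEnd ℂ)
              (ws n (fun t => (starRingEnd ℂ) (ψ₂ t)) (fun t => (starRingEnd ℂ) (ψ₁ t)) x);
           ws n ψ₁ ψ₂ x, 0] ∧
      W n x 0 0 = 0 ∧ W n x 1 1 = 0 ∧
      σ * W n x * σ = (W' n x).map (starRingEnd ℂ) := by
  have hc2 : c * c = κ := by
    rcases hcase with ⟨h1, h2, h3⟩ | ⟨h1, h2, h3⟩ <;> subst h1 <;> subst h2 <;> simp
  have hκ : (starRingEnd ℂ) κ = κ := by
    rcases hcase with ⟨h1, h2, h3⟩ | ⟨h1, h2, h3⟩ <;> subst h1 <;> simp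
  have hW := aux_formula κ c hc2 hκ ψ₁ ψ₂ W ws hW1 hWrec hws_base hws_rec
  have hW' := aux_formula κ c hc2 hκ (fun t => (starRingEnd ℂ) (ψ₂ t))
    (fun t => (starRingEnd ℂ) (ψ₁ t)) W' ws hW'1 hW'rec hws_base hws_rec
  simp only [Complex.conj_conj] at hW'
  refine ⟨hW n hn x, ?_, ?_, ?_⟩
  · rw [hW n hn x]; simp
  · rw [hW n hn x]; simp
  · rw [hW n hn x, hW' n hn x]
    rcases hcase with ⟨h1, h2, h3⟩ | ⟨h1, h2, h3⟩ <;> subst h2 <;> subst h3 <;>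
      · ext i j
        fin_cases i <;> fin_cases j <;>
          · simp [Matrix.mul_apply, Fin.sum_univ_succ, Matrix.map_apply, map_mul, map_neg,
              Complex.conj_I]
            try ring_nf
            try simp [Complex.I_sq]
            try ring_nf
end
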